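/- (Weyl degeneracy + parallel null vector ⇒ pp-wave) If (M,g), dim n > 2, admits a parallel null vector field K and its Weyl tensor satisfies C_{abcd}X^aY^b = 0 for all X,Y ⊥ K, then the scalar curvature vanishes (R = 0) and g is a pure radiation metric aligned with K, hence a pp-wave. -/

import Mathlib

/- A coordinate-chart framework for pseudo-Riemannian geometry on ℝⁿ:
metric, Christoffel symbols, covariant derivatives, curvature, Ricci,
Schouten, Weyl, Cotton and Bach tensors, and the standard tractor
connection, all written in index notation. -/

noncomputable section

open scoped BigOperators

/-- Points of the chart ℝⁿ. -/
abbrev Pt (n : ℕ) := Fin n → ℝ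

/-- Partial derivative of a scalar function in the coordinate direction `a`. -/
def pd {n : ℕ} (a : Fin n) (f : Pt n → ℝ) (x : Pt n) : ℝ :=
  fderiv ℝ f x (Pi.single a 1)

/-- A smooth vector field. -/
def SmoothVF {n : ℕ} (K : Pt n → Pt n) : Prop := ∀ b, ContDiff ℝ (⊤ : ℕ∞) (fun x => K x b)

/-- A smooth one-form. -/
def SmoothForm {n : ℕ} (f : Pt n → Fin n → ℝ) : Prop := ∀ b, ContDiff ℝ (⊤ : ℕ∞) (fun x => f x b)

/-- A pseudo-Riemannian metric (of arbitrary signature) in a global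
coordinate chart on ℝⁿ, given by its components `g x a b`, together with the
components `ginv` of its pointwise inverse. -/
structure MetricG (n : ℕ) where
  g : Pt n → Fin n → Fin n → ℝ
  ginv : Pt n → Fin n → Fin n → ℝ
  symm : ∀ x a b, g x a b = g x b a
  smooth : ∀ a b, ContDiff ℝ (⊤ : ℕ∞) (fun x => g x a b)
  inv_mul : ∀ x a c, (∑ b, ginv x a b * g x b c) = if a = c then (1:ℝ) else 0

namespace MetricG

variable {n : ℕ} (G : MetricG n)

/-- The inner product of two tangent vectors at `x`. -/
def ip (x : Pt n) (X Y : Pt n) : ℝ := ∑ a, ∑ b, G.g x a b * X a * Y b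

/-- Christoffel symbols Γ^c_{ab} of the Levi-Civita connection. -/
def Γ (c a b : Fin n) (x : Pt n) : ℝ :=
  (1/2) * ∑ d, G.ginv x c d *
    (pd a (fun y => G.g y d b) x + pd b (fun y => G.g y d a) x - pd d (fun y => G.g y a b) x)

/-- Covariant derivative (∇_a X)^b of a vector field. -/
def covVec (X : Pt n → Pt n) (a b : Fin n) (x : Pt n) : ℝ :=
  pd a (fun y => X y b) x + ∑ c, G.Γ b a c x * X x c

/-- Covariant derivative ∇_a ω_b of a one-form. -/
def cov1 (ω : Pt n → Fin n → ℝ) (a b : Fin n) (x : Pt n) : ℝ :=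
  pd a (fun y => ω y b) x - ∑ e, G.Γ e a b x * ω x e

/-- Covariant derivative ∇_a T_{bc} of a (0,2)-tensor field. -/
def cov2 (T : Pt n → Fin n → Fin n → ℝ) (a b c : Fin n) (x : Pt n) : ℝ :=
  pd a (fun y => T y b c) x - ∑ e, G.Γ e a b x * T x e c - ∑ e, G.Γ e a c x * T x b e

/-- Covariant derivative ∇_a T_{bcd} of a (0,3)-tensor field. -/
def cov3 (T : Pt n → Fin n → Fin n → Fin n → ℝ) (a b c d : Fin n) (x : Pt n) : ℝ :=
  pd a (fun y => T y b c d) x - ∑ e, G.Γ e a b x * T x e c d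
    - ∑ e, G.Γ e a c x * T x b e d - ∑ e, G.Γ e a d x * T x b c e

/-- Curvature tensor R_{ab}{}^c{}_d, with the convention
`(∇_a∇_b − ∇_b∇_a)X^c = R_{ab}{}^c{}_d X^d`. -/
def Riem (a b c d : Fin n) (x : Pt n) : ℝ :=
  pd a (fun y => G.Γ c b d y) x - pd b (fun y => G.Γ c a d y) x
    + ∑ e, (G.Γ c a e x * G.Γ e b d x - G.Γ c b e x * G.Γ e a d x)

/-- (4,0)-curvature tensor R_{abcd} = g_{ce} R_{ab}{}^e{}_d. -/
def Riem4 (a b c d : Fin n) (x : Pt n) : ℝ :=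
  ∑ e, G.g x c e * G.Riem a b e d x

/-- Ricci tensor R_{bd} = R_{cb}{}^c{}_d. -/
def Ricci (b d : Fin n) (x : Pt n) : ℝ := ∑ c, G.Riem c b c d x

/-- Scalar curvature R = g^{ab} R_{ab}. -/
def Scal (x : Pt n) : ℝ := ∑ a, ∑ b, G.ginv x a b * G.Ricci a b x

/-- Schouten tensor P_{ab} = (1/(n−2)) (R_{ab} − R/(2(n−1)) g_{ab}). -/
def Schouten (a b : Fin n) (x : Pt n) : ℝ :=
  (1 / ((n : ℝ) - 2)) * (G.Ricci a b x - G.Scal x / (2 * ((n : ℝ) - 1)) * G.g x a b)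

/-- Weyl tensor C_{abcd} = R_{abcd} − 2(g_{c[a}P_{b]d} + g_{d[b}P_{a]c}). -/
def Weyl (a b c d : Fin n) (x : Pt n) : ℝ :=
  G.Riem4 a b c d x -
    (G.g x c a * G.Schouten b d x - G.g x c b * G.Schouten a d x
      + G.g x d b * G.Schouten a c x - G.g x d a * G.Schouten b c x)

/-- Cotton tensor A_{abc} = ∇_b P_{ca} − ∇_c P_{ba} (= 2∇_{[b}P_{c]a}). -/
def Cotton (a b c : Fin n) (x : Pt n) : ℝ :=
  G.cov2 (fun y i j => G.Schouten i j y) b c a x - G.cov2 (fun y i j => G.Schouten i j y) c b a x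

/-- Bach tensor B_{ab} = ∇^c A_{acb} + P^{dc} C_{dacb}. -/
def Bach (a b : Fin n) (x : Pt n) : ℝ :=
  (∑ c, ∑ e, G.ginv x c e * G.cov3 (fun y i j k => G.Cotton i j k y) e a c b x)
    + ∑ d, ∑ c, (∑ i, ∑ j, G.ginv x d i * G.ginv x c j * G.Schouten i j x) * G.Weyl d a c b x

/-- `K` is a null vector field. -/
def IsNull (K : Pt n → Pt n) : Prop := ∀ x, G.ip x (K x) (K x) = 0

/-- Pure radiation condition: Ric(X,·) = 0 for every vector X orthogonal to K. -/
def PureRadiation (K : Pt n → Pt n) : Prop :=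
  ∀ x (X : Pt n), G.ip x (K x) X = 0 → ∀ b, (∑ a, G.Ricci a b x * X a) = 0

/-- Parallel rays condition: ∇_a K^b = f_a K^b. -/
def ParallelRays (K : Pt n → Pt n) (f : Pt n → Fin n → ℝ) : Prop :=
  ∀ x a b, G.covVec K a b x = f x a * K x b

/-- first (ℝ-) component of the tractor derivative of the tractor (ρ, X, σ):
∇_a ρ − P_{ab} X^b. -/
def trD0 (ρ : Pt n → ℝ) (X : Pt n → Pt n) (a : Fin n) (x : Pt n) : ℝ :=
  pd a ρ x - ∑ b, G.Schouten a b x * X x b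

/-- middle (TM-) component of the tractor derivative of the tractor (ρ, X, σ):
∇_a X^b + ρ δ_a{}^b + σ P_a{}^b. -/
def trD1 (ρ : Pt n → ℝ) (X : Pt n → Pt n) (σ : Pt n → ℝ) (a b : Fin n) (x : Pt n) : ℝ :=
  G.covVec X a b x + ρ x * (if a = b then (1:ℝ) else 0)
    + σ x * ∑ e, G.ginv x b e * G.Schouten a e x

/-- last (ℝ-) component of the tractor derivative of the tractor (ρ, X, σ):
∇_a σ − g_{ab} X^b. -/
def trD2 (X : Pt n → Pt n) (σ : Pt n → ℝ) (a : Fin n) (x : Pt n) : ℝ :=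
  pd a σ x - ∑ b, G.g x a b * X x b

end MetricG

/-! ### Auxiliary development for stmt_15 -/

section PdCalculus

variable {n : ℕ}

lemma pd_congr {f h : Pt n → ℝ} (hfh : ∀ y, f y = h y) (a : Fin n) (x : Pt n) :
    pd a f x = pd a h x := by
  have : f = h := funext hfh
  rw [this]

lemma pd_add {f h : Pt n → ℝ} {x : Pt n} (hf : DifferentiableAt ℝ f x)
    (hh : DifferentiableAt ℝ h x) (a : Fin n) :
    pd a (fun y => f y + h y) x = pd a f x + pd a h x := by
  simp only [pd, fderiv_fun_add hf hh, ContinuousLinearMap.add_apply]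

lemma pd_sub {f h : Pt n → ℝ} {x : Pt n} (hf : DifferentiableAt ℝ f x)
    (hh : DifferentiableAt ℝ h x) (a : Fin n) :
    pd a (fun y => f y - h y) x = pd a f x - pd a h x := by
  simp only [pd, fderiv_fun_sub hf hh, ContinuousLinearMap.sub_apply]

lemma pd_neg {f : Pt n → ℝ} {x : Pt n} (a : Fin n) :
    pd a (fun y => -f y) x = -pd a f x := by
  simp only [pd, fderiv_fun_neg, ContinuousLinearMap.neg_apply]

lemma pd_mul {f h : Pt n → ℝ} {x : Pt n} (hf : DifferentiableAt ℝ f x)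
    (hh : DifferentiableAt ℝ h x) (a : Fin n) :
    pd a (fun y => f y * h y) x = pd a f x * h x + f x * pd a h x := by
  simp only [pd, fderiv_fun_mul hf hh, ContinuousLinearMap.add_apply,
    ContinuousLinearMap.smul_apply, smul_eq_mul]
  ring

lemma pd_const_mul {f : Pt n → ℝ} {x : Pt n} (hf : DifferentiableAt ℝ f x) (c : ℝ) (a : Fin n) :
    pd a (fun y => c * f y) x = c * pd a f x := by
  simp only [pd, fderiv_const_mul hf, ContinuousLinearMap.smul_apply, smul_eq_mul]

lemma pd_sum {ι : Type*} {s : Finset ι} {f : ι → Pt n → ℝ} {x : Pt n}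
    (hf : ∀ i ∈ s, DifferentiableAt ℝ (f i) x) (a : Fin n) :
    pd a (fun y => ∑ i ∈ s, f i y) x = ∑ i ∈ s, pd a (f i) x := by
  simp only [pd, fderiv_fun_sum hf, ContinuousLinearMap.sum_apply]

lemma pd_smooth {f : Pt n → ℝ} (hf : ContDiff ℝ (⊤ : ℕ∞) f) (a : Fin n) :
    ContDiff ℝ (⊤ : ℕ∞) fun x => pd a f x := by
  have h1 : ContDiff ℝ (⊤ : ℕ∞) (fderiv ℝ f) := hf.fderiv_right (by simp)
  exact h1.clm_apply contDiff_const

lemma pd_comm {f : Pt n → ℝ} (hf : ContDiff ℝ (⊤ : ℕ∞) f) (a b : Fin n) (x : Pt n) :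
    pd a (fun y => pd b f y) x = pd b (fun y => pd a f y) x := by
  have hsymm : IsSymmSndFDerivAt ℝ f x :=
    hf.contDiffAt.isSymmSndFDerivAt (by rw [minSmoothness_of_isRCLikeNormedField]; exact WithTop.coe_le_coe.mpr (le_top : (2:ℕ∞) ≤ ⊤))
  have hd : DifferentiableAt ℝ (fderiv ℝ f) x :=
    ((hf.fderiv_right (m := 1) (WithTop.coe_le_coe.mpr le_top)).differentiable (by simp)).differentiableAt
  have key : ∀ v w : Pt n, fderiv ℝ (fun y => fderiv ℝ f y w) x v
      = fderiv ℝ (fderiv ℝ f) x v w := by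
    intro v w
    rw [fderiv_clm_apply hd (differentiableAt_const w)]
    simp
  show fderiv ℝ (fun y => fderiv ℝ f y (Pi.single b 1)) x (Pi.single a 1)
      = fderiv ℝ (fun y => fderiv ℝ f y (Pi.single a 1)) x (Pi.single b 1)
  rw [key, key]
  exact hsymm _ _

end PdCalculus

section SumHelpers

variable {n : ℕ}

lemma dsum₁ (f : Fin n → ℝ) (a : Fin n) :
    (∑ b, (if a = b then (1:ℝ) else 0) * f b) = f a := by simp

lemma dsum₂ (f : Fin n → ℝ) (a : Fin n) :
    (∑ b, (if b = a then (1:ℝ) else 0) * f b) = f a := by simp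

end SumHelpers

namespace MetricG

variable {n : ℕ} (G : MetricG n)

/-- The metric as a matrix-valued function. -/
def gmat (x : Pt n) : Matrix (Fin n) (Fin n) ℝ := Matrix.of fun a b => G.g x a b

/-- The inverse metric as a matrix-valued function. -/
def gimat (x : Pt n) : Matrix (Fin n) (Fin n) ℝ := Matrix.of fun a b => G.ginv x a b

lemma gimat_mul (x : Pt n) : G.gimat x * G.gmat x = 1 := by
  ext a c
  simpa [Matrix.mul_apply, gmat, gimat, Matrix.one_apply] using G.inv_mul x a c

lemma gmat_mul (x : Pt n) : G.gmat x * G.gimat x = 1 :=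
  mul_eq_one_comm.2 (G.gimat_mul x)

lemma gimat_eq_inv (x : Pt n) : (G.gmat x)⁻¹ = G.gimat x :=
  Matrix.inv_eq_left_inv (G.gimat_mul x)

lemma mul_inv (x : Pt n) (a c : Fin n) :
    (∑ b, G.g x a b * G.ginv x b c) = if a = c then (1:ℝ) else 0 := by
  have h := congrArg (fun M => M a c) (G.gmat_mul x)
  simpa [Matrix.mul_apply, Matrix.one_apply, gmat, gimat] using h

lemma det_gmat_ne_zero (x : Pt n) : (G.gmat x).det ≠ 0 := by
  intro h
  have h1 := congrArg Matrix.det (G.gmat_mul x)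
  rw [Matrix.det_mul, h, Matrix.det_one] at h1
  simp at h1

lemma ginv_symm (x : Pt n) (a b : Fin n) : G.ginv x a b = G.ginv x b a := by
  have hsym : (G.gmat x).transpose = G.gmat x := by
    ext i j; simp [gmat, Matrix.transpose_apply, G.symm x i j]
  have h1 : (G.gimat x).transpose = G.gimat x := by
    rw [← G.gimat_eq_inv x, Matrix.transpose_nonsing_inv, hsym, G.gimat_eq_inv x]
  have := congrArg (fun M => M a b) h1
  have h2 : G.ginv x b a = G.ginv x a b := by simpa [gimat, Matrix.transpose_apply] using this
  exact h2.symm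

lemma contDiff_det_of_entries {M : Pt n → Matrix (Fin n) (Fin n) ℝ}
    (hM : ∀ a b, ContDiff ℝ (⊤ : ℕ∞) fun x => M x a b) :
    ContDiff ℝ (⊤ : ℕ∞) fun x => (M x).det := by
  have : (fun x => (M x).det)
      = fun x => ∑ σ : Equiv.Perm (Fin n), ((Equiv.Perm.sign σ : ℤ) : ℝ) * ∏ i, M x (σ i) i :=
    funext fun x => by rw [Matrix.det_apply']
  rw [this]
  exact ContDiff.sum fun σ _ => contDiff_const.mul (contDiff_prod fun i _ => hM _ _)

lemma ginv_contDiff (a b : Fin n) : ContDiff ℝ (⊤ : ℕ∞) fun x => G.ginv x a b := by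
  have hg : ∀ a b, ContDiff ℝ (⊤ : ℕ∞) fun x => G.gmat x a b := fun a b => G.smooth a b
  have hdet : ContDiff ℝ (⊤ : ℕ∞) fun x => (G.gmat x).det := contDiff_det_of_entries hg
  have hdinv : ContDiff ℝ (⊤ : ℕ∞) fun x => ((G.gmat x).det)⁻¹ := by
    rw [contDiff_iff_contDiffAt]
    intro x
    exact (hdet.contDiffAt).inv (G.det_gmat_ne_zero x)
  have hadj : ContDiff ℝ (⊤ : ℕ∞) fun x => (G.gmat x).adjugate a b := by
    have : (fun x => (G.gmat x).adjugate a b)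
        = fun x => ((G.gmat x).updateRow b (Pi.single a 1)).det :=
      funext fun x => by rw [Matrix.adjugate_apply]
    rw [this]
    refine contDiff_det_of_entries fun i j => ?_
    rcases eq_or_ne i b with rfl | hib
    · simpa [Matrix.updateRow_apply] using (contDiff_const :
        ContDiff ℝ (⊤ : ℕ∞) fun _ : Pt n => (Pi.single a 1 : Fin n → ℝ) j)
    · simpa [Matrix.updateRow_apply, hib] using hg i j
  have heq : (fun x => G.ginv x a b)
      = fun x => ((G.gmat x).det)⁻¹ * (G.gmat x).adjugate a b := by
    funext x
    have h1 : (G.gmat x)⁻¹ a b = G.ginv x a b := by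
      rw [G.gimat_eq_inv x]; rfl
    rw [← h1, Matrix.inv_def, Ring.inverse_eq_inv']
    simp [Matrix.smul_apply, smul_eq_mul]
  rw [heq]
  exact hdinv.mul hadj

end MetricG

namespace MetricG

variable {n : ℕ} (G : MetricG n)

/-- Lowered Christoffel symbol Γ_{cab}. -/
def Γl (c a b : Fin n) (x : Pt n) : ℝ :=
  (1/2) * (pd a (fun y => G.g y c b) x + pd b (fun y => G.g y c a) x
    - pd c (fun y => G.g y a b) x)

/-- Second partial of a metric coefficient. -/
def pdd (u v p q : Fin n) (x : Pt n) : ℝ :=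
  pd u (fun y => pd v (fun z => G.g z p q) y) x

lemma g_diffAt (a b : Fin n) (x : Pt n) : DifferentiableAt ℝ (fun y => G.g y a b) x :=
  ((G.smooth a b).differentiable (by simp)).differentiableAt

lemma pdg_contDiff (a c e : Fin n) : ContDiff ℝ (⊤ : ℕ∞) fun x => pd a (fun y => G.g y c e) x :=
  pd_smooth (G.smooth c e) a

lemma pdg_diffAt (a c e : Fin n) (x : Pt n) :
    DifferentiableAt ℝ (fun y => pd a (fun z => G.g z c e) y) x :=
  ((G.pdg_contDiff a c e).differentiable (by simp)).differentiableAt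

lemma Γl_contDiff (c a b : Fin n) : ContDiff ℝ (⊤ : ℕ∞) fun x => G.Γl c a b x := by
  unfold Γl
  exact contDiff_const.mul (((pd_smooth (G.smooth c b) a).add
    (pd_smooth (G.smooth c a) b)).sub (pd_smooth (G.smooth a b) c))

lemma Γ_eq (c a b : Fin n) (x : Pt n) : G.Γ c a b x = ∑ d, G.ginv x c d * G.Γl d a b x := by
  unfold Γ Γl
  rw [Finset.mul_sum]
  exact Finset.sum_congr rfl fun d _ => by ring

lemma Γ_contDiff (c a b : Fin n) : ContDiff ℝ (⊤ : ℕ∞) fun x => G.Γ c a b x := by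
  have h : (fun x => G.Γ c a b x) = fun x => ∑ d, G.ginv x c d * G.Γl d a b x :=
    funext fun x => G.Γ_eq c a b x
  rw [h]
  exact ContDiff.sum fun d _ => (G.ginv_contDiff c d).mul (G.Γl_contDiff d a b)

lemma Γ_diffAt (c a b : Fin n) (x : Pt n) : DifferentiableAt ℝ (fun y => G.Γ c a b y) x :=
  ((G.Γ_contDiff c a b).differentiable (by simp)).differentiableAt

lemma Γl_symm (c a b : Fin n) (x : Pt n) : G.Γl c a b x = G.Γl c b a x := by
  unfold Γl
  rw [show pd c (fun y => G.g y a b) x = pd c (fun y => G.g y b a) x from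
    pd_congr (fun y => G.symm y a b) c x]
  ring

lemma pd_g_eq (a c e : Fin n) (x : Pt n) :
    pd a (fun y => G.g y c e) x = G.Γl c a e x + G.Γl e a c x := by
  unfold Γl
  rw [show pd a (fun y => G.g y e c) x = pd a (fun y => G.g y c e) x from
    pd_congr (fun y => G.symm y e c) a x]
  rw [show pd e (fun y => G.g y c a) x = pd e (fun y => G.g y a c) x from
    pd_congr (fun y => G.symm y c a) e x]
  rw [show pd c (fun y => G.g y e a) x = pd c (fun y => G.g y a e) x from
    pd_congr (fun y => G.symm y e a) c x]
  ring

lemma g_mul_Γ (c a b : Fin n) (x : Pt n) :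
    (∑ e, G.g x c e * G.Γ e a b x) = G.Γl c a b x := by
  have h1 : ∀ e, G.g x c e * G.Γ e a b x = ∑ d, G.g x c e * G.ginv x e d * G.Γl d a b x := by
    intro e
    rw [G.Γ_eq, Finset.mul_sum]
    exact Finset.sum_congr rfl fun d _ => by ring
  simp_rw [h1]
  rw [Finset.sum_comm]
  have h2 : ∀ d, (∑ e, G.g x c e * G.ginv x e d * G.Γl d a b x)
      = (if c = d then (1:ℝ) else 0) * G.Γl d a b x := by
    intro d
    rw [← Finset.sum_mul, G.mul_inv]
  simp_rw [h2]
  exact dsum₁ _ c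

lemma sum_g_pdΓ (a b c d : Fin n) (x : Pt n) :
    (∑ e, G.g x c e * pd a (fun y => G.Γ e b d y) x)
      = pd a (fun y => G.Γl c b d y) x
        - ∑ e, (G.Γl c a e x + G.Γl e a c x) * G.Γ e b d x := by
  have h2 : (fun y => G.Γl c b d y) = fun y => ∑ e, G.g y c e * G.Γ e b d y :=
    funext fun y => (G.g_mul_Γ c b d y).symm
  have h1 : pd a (fun y => G.Γl c b d y) x
      = ∑ e, (pd a (fun y => G.g y c e) x * G.Γ e b d x
          + G.g x c e * pd a (fun y => G.Γ e b d y) x) := by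
    rw [h2, pd_sum (f := fun e y => G.g y c e * G.Γ e b d y) (fun e _ => (G.g_diffAt c e x).mul (G.Γ_diffAt e b d x)) a]
    exact Finset.sum_congr rfl fun e _ => pd_mul (G.g_diffAt c e x) (G.Γ_diffAt e b d x) a
  simp_rw [G.pd_g_eq] at h1
  rw [h1, Finset.sum_add_distrib]
  ring

lemma ΓlΓ_expand (p q r s : Fin n) (x : Pt n) :
    (∑ e, G.Γl e p q x * G.Γ e r s x)
      = ∑ e, ∑ f, G.ginv x e f * (G.Γl e p q x * G.Γl f r s x) := by
  refine Finset.sum_congr rfl fun e _ => ?_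
  rw [G.Γ_eq, Finset.mul_sum]
  exact Finset.sum_congr rfl fun f _ => by ring

lemma pd_Γl (a b c d : Fin n) (x : Pt n) :
    pd a (fun y => G.Γl c b d y) x
      = (1/2) * (G.pdd a b c d x + G.pdd a d c b x - G.pdd a c b d x) := by
  unfold Γl pdd
  rw [pd_const_mul (f := fun y => pd b (fun z => G.g z c d) y + pd d (fun z => G.g z c b) y
    - pd c (fun z => G.g z b d) y) (((G.pdg_diffAt b c d x).add (G.pdg_diffAt d c b x)).sub
    (G.pdg_diffAt c b d x)) _ a]
  rw [pd_sub (f := fun y => pd b (fun z => G.g z c d) y + pd d (fun z => G.g z c b) y) ((G.pdg_diffAt b c d x).add (G.pdg_diffAt d c b x)) (G.pdg_diffAt c b d x) a]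
  rw [pd_add (G.pdg_diffAt b c d x) (G.pdg_diffAt d c b x) a]

lemma pdd_comm (u v p q : Fin n) (x : Pt n) : G.pdd u v p q x = G.pdd v u p q x :=
  pd_comm (G.smooth p q) u v x

lemma pdd_symm (u v p q : Fin n) (x : Pt n) : G.pdd u v p q x = G.pdd u v q p x := by
  unfold pdd
  exact pd_congr (fun y => pd_congr (fun z => G.symm z p q) v y) u x

/-- The closed formula for the (4,0) curvature tensor. -/
lemma Riem4_eq (a b c d : Fin n) (x : Pt n) :
    G.Riem4 a b c d x
      = (1/2) * (G.pdd a d b c x + G.pdd b c a d x - G.pdd a c b d x - G.pdd b d a c x)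
        + (∑ e, ∑ f, G.ginv x e f * (G.Γl e b c x * G.Γl f a d x
            - G.Γl e a c x * G.Γl f b d x)) := by
  have hexp : G.Riem4 a b c d x
      = (∑ e, G.g x c e * pd a (fun y => G.Γ e b d y) x)
        - (∑ e, G.g x c e * pd b (fun y => G.Γ e a d y) x)
        + ((∑ e, ∑ f, G.g x c e * (G.Γ e a f x * G.Γ f b d x))
          - ∑ e, ∑ f, G.g x c e * (G.Γ e b f x * G.Γ f a d x)) := by
    unfold Riem4 Riem
    simp only [mul_add, mul_sub, Finset.mul_sum, Finset.sum_add_distrib,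
      Finset.sum_sub_distrib]
  have hT3 : (∑ e, ∑ f, G.g x c e * (G.Γ e a f x * G.Γ f b d x))
      = ∑ f, G.Γl c a f x * G.Γ f b d x := by
    rw [Finset.sum_comm]
    refine Finset.sum_congr rfl fun f _ => ?_
    rw [← G.g_mul_Γ c a f x, Finset.sum_mul]
    exact Finset.sum_congr rfl fun e _ => by ring
  have hT4 : (∑ e, ∑ f, G.g x c e * (G.Γ e b f x * G.Γ f a d x))
      = ∑ f, G.Γl c b f x * G.Γ f a d x := by
    rw [Finset.sum_comm]
    refine Finset.sum_congr rfl fun f _ => ?_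
    rw [← G.g_mul_Γ c b f x, Finset.sum_mul]
    exact Finset.sum_congr rfl fun e _ => by ring
  rw [hexp, hT3, hT4, G.sum_g_pdΓ a b c d x, G.sum_g_pdΓ b a c d x]
  simp only [add_mul, Finset.sum_add_distrib]
  rw [G.pd_Γl a b c d x, G.pd_Γl b a c d x]
  rw [G.ΓlΓ_expand _ _ _ _ x, G.ΓlΓ_expand _ _ _ _ x]
  rw [show (∑ e, ∑ f, G.ginv x e f * (G.Γl e b c x * G.Γl f a d x - G.Γl e a c x * G.Γl f b d x))
      = (∑ e, ∑ f, G.ginv x e f * (G.Γl e b c x * G.Γl f a d x))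
        - ∑ e, ∑ f, G.ginv x e f * (G.Γl e a c x * G.Γl f b d x) by
    simp only [mul_sub, Finset.sum_sub_distrib]]
  rw [show G.pdd a b c d x = G.pdd b a c d x from G.pdd_comm a b c d x]
  rw [show G.pdd a d c b x = G.pdd a d b c x from G.pdd_symm a d c b x]
  rw [show G.pdd b d c a x = G.pdd b d a c x from G.pdd_symm b d c a x]
  ring

lemma sum2_ginv_swap (x : Pt n) (X : Fin n → Fin n → ℝ) :
    (∑ e, ∑ f, G.ginv x e f * X e f) = ∑ e, ∑ f, G.ginv x e f * X f e := by
  rw [Finset.sum_comm]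
  exact Finset.sum_congr rfl fun e _ =>
    Finset.sum_congr rfl fun f _ => by rw [G.ginv_symm x e f]

lemma Riem4_antisym_cd (a b c d : Fin n) (x : Pt n) :
    G.Riem4 a b d c x = - G.Riem4 a b c d x := by
  rw [G.Riem4_eq a b d c x, G.Riem4_eq a b c d x]
  have hΓΓ : (∑ e, ∑ f, G.ginv x e f * (G.Γl e b d x * G.Γl f a c x
        - G.Γl e a d x * G.Γl f b c x))
      = - ∑ e, ∑ f, G.ginv x e f * (G.Γl e b c x * G.Γl f a d x
        - G.Γl e a c x * G.Γl f b d x) := by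
    rw [G.sum2_ginv_swap x
      (fun e f => G.Γl e b d x * G.Γl f a c x - G.Γl e a d x * G.Γl f b c x)]
    rw [← Finset.sum_neg_distrib]
    refine Finset.sum_congr rfl fun e _ => ?_
    rw [← Finset.sum_neg_distrib]
    exact Finset.sum_congr rfl fun f _ => by ring
  rw [hΓΓ]
  ring

lemma Riem4_pair (a b c d : Fin n) (x : Pt n) :
    G.Riem4 a b c d x = G.Riem4 c d a b x := by
  rw [G.Riem4_eq a b c d x, G.Riem4_eq c d a b x]
  have hsplit : ∀ p q r s p' q' r' s' : Fin n,
      (∑ e, ∑ f, G.ginv x e f * (G.Γl e p q x * G.Γl f r s x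
          - G.Γl e p' q' x * G.Γl f r' s' x))
        = (∑ e, ∑ f, G.ginv x e f * (G.Γl e p q x * G.Γl f r s x))
          - ∑ e, ∑ f, G.ginv x e f * (G.Γl e p' q' x * G.Γl f r' s' x) := by
    intro p q r s p' q' r' s'
    simp only [mul_sub, Finset.sum_sub_distrib]
  rw [hsplit, hsplit]
  have h1 : (∑ e, ∑ f, G.ginv x e f * (G.Γl e d a x * G.Γl f c b x))
      = ∑ e, ∑ f, G.ginv x e f * (G.Γl e b c x * G.Γl f a d x) := by
    rw [G.sum2_ginv_swap x (fun e f => G.Γl e d a x * G.Γl f c b x)]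
    refine Finset.sum_congr rfl fun e _ => Finset.sum_congr rfl fun f _ => ?_
    rw [G.Γl_symm f d a x, G.Γl_symm e c b x]
    ring
  have h2 : (∑ e, ∑ f, G.ginv x e f * (G.Γl e c a x * G.Γl f d b x))
      = ∑ e, ∑ f, G.ginv x e f * (G.Γl e a c x * G.Γl f b d x) := by
    refine Finset.sum_congr rfl fun e _ => Finset.sum_congr rfl fun f _ => ?_
    rw [G.Γl_symm e c a x, G.Γl_symm f d b x]
  rw [h1, h2]
  rw [show G.pdd c b d a x = G.pdd b c a d x by rw [G.pdd_comm, G.pdd_symm]]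
  rw [show G.pdd d a c b x = G.pdd a d b c x by rw [G.pdd_comm, G.pdd_symm]]
  rw [show G.pdd c a d b x = G.pdd a c b d x by rw [G.pdd_comm, G.pdd_symm]]
  rw [show G.pdd d b c a x = G.pdd b d a c x by rw [G.pdd_comm, G.pdd_symm]]
  ring

end MetricG

namespace MetricG

variable {n : ℕ} (G : MetricG n)

section Parallel

variable {K : Pt n → Pt n}

lemma pdK_eq (hpar : ∀ x a b, G.covVec K a b x = 0) (x : Pt n) (a b : Fin n) :
    pd a (fun y => K y b) x = - ∑ c, G.Γ b a c x * K x c := by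
  have h := hpar x a b
  unfold covVec at h
  linarith

lemma Riem_K (hKs : SmoothVF K) (hpar : ∀ x a b, G.covVec K a b x = 0)
    (x : Pt n) (a b c : Fin n) :
    (∑ d, G.Riem a b c d x * K x d) = 0 := by
  have hKd : ∀ e x', DifferentiableAt ℝ (fun y => K y e) x' :=
    fun e x' => ((hKs e).differentiable (by simp)).differentiableAt
  -- key: ∑ d, pd u (Γ c v d) * K d = - pd u (pd v K^c) + ∑ d, ∑ e, Γ c v d * Γ d u e * K e
  have key : ∀ u v : Fin n,
      (∑ d, pd u (fun y => G.Γ c v d y) x * K x d)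
        = - pd u (fun y => pd v (fun z => K z c) y) x
          + ∑ d, ∑ e, G.Γ c v d x * (G.Γ d u e x * K x e) := by
    intro u v
    have h0 : (fun y => ∑ d, G.Γ c v d y * K y d) = fun y => - pd v (fun z => K z c) y := by
      funext y
      rw [G.pdK_eq hpar y v c]
      ring
    have h1 : pd u (fun y => ∑ d, G.Γ c v d y * K y d) x
        = ∑ d, (pd u (fun y => G.Γ c v d y) x * K x d + G.Γ c v d x * pd u (fun y => K y d) x) := by
      rw [pd_sum (f := fun d y => G.Γ c v d y * K y d) (fun d _ => (G.Γ_diffAt c v d x).mul (hKd d x)) u]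
      exact Finset.sum_congr rfl fun d _ => pd_mul (G.Γ_diffAt c v d x) (hKd d x) u
    rw [h0] at h1
    rw [pd_neg] at h1
    have h2 : ∀ d, G.Γ c v d x * pd u (fun y => K y d) x
        = - ∑ e, G.Γ c v d x * (G.Γ d u e x * K x e) := by
      intro d
      rw [G.pdK_eq hpar x u d, mul_neg, Finset.mul_sum]
    simp_rw [h2] at h1
    rw [Finset.sum_add_distrib, Finset.sum_neg_distrib] at h1
    linarith [h1]
  unfold Riem
  have hsplit : (∑ d, (pd a (fun y => G.Γ c b d y) x - pd b (fun y => G.Γ c a d y) x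
      + ∑ e, (G.Γ c a e x * G.Γ e b d x - G.Γ c b e x * G.Γ e a d x)) * K x d)
    = (∑ d, pd a (fun y => G.Γ c b d y) x * K x d)
      - (∑ d, pd b (fun y => G.Γ c a d y) x * K x d)
      + ((∑ d, ∑ e, G.Γ c a e x * G.Γ e b d x * K x d)
        - ∑ d, ∑ e, G.Γ c b e x * G.Γ e a d x * K x d) := by
    simp only [sub_mul, add_mul, Finset.sum_mul, Finset.sum_add_distrib,
      Finset.sum_sub_distrib]
  rw [hsplit, key a b, key b a]
  rw [pd_comm (hKs c) a b x]
  have h3 : (∑ d, ∑ e, G.Γ c a e x * G.Γ e b d x * K x d)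
      = ∑ d, ∑ e, G.Γ c a d x * (G.Γ d b e x * K x e) := by
    rw [Finset.sum_comm]
    exact Finset.sum_congr rfl fun d _ => Finset.sum_congr rfl fun e _ => by ring
  have h4 : (∑ d, ∑ e, G.Γ c b e x * G.Γ e a d x * K x d)
      = ∑ d, ∑ e, G.Γ c b d x * (G.Γ d a e x * K x e) := by
    rw [Finset.sum_comm]
    exact Finset.sum_congr rfl fun d _ => Finset.sum_congr rfl fun e _ => by ring
  rw [h3, h4]
  ring

lemma Riem4_K_slot4 (hKs : SmoothVF K) (hpar : ∀ x a b, G.covVec K a b x = 0)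
    (x : Pt n) (a b c : Fin n) :
    (∑ d, G.Riem4 a b c d x * K x d) = 0 := by
  unfold Riem4
  have h1 : (∑ d, (∑ e, G.g x c e * G.Riem a b e d x) * K x d)
      = ∑ e, G.g x c e * ∑ d, G.Riem a b e d x * K x d := by
    calc (∑ d, (∑ e, G.g x c e * G.Riem a b e d x) * K x d)
        = ∑ d, ∑ e, G.g x c e * (G.Riem a b e d x * K x d) := by
          refine Finset.sum_congr rfl fun d _ => ?_
          rw [Finset.sum_mul]
          exact Finset.sum_congr rfl fun e _ => by ring
      _ = ∑ e, ∑ d, G.g x c e * (G.Riem a b e d x * K x d) := Finset.sum_comm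
      _ = ∑ e, G.g x c e * ∑ d, G.Riem a b e d x * K x d :=
          Finset.sum_congr rfl fun e _ => (Finset.mul_sum _ _ _).symm
  rw [h1]
  simp [G.Riem_K hKs hpar x a b]

lemma Riem4_K_slot3 (hKs : SmoothVF K) (hpar : ∀ x a b, G.covVec K a b x = 0)
    (x : Pt n) (a b d : Fin n) :
    (∑ c, G.Riem4 a b c d x * K x c) = 0 := by
  have h1 : ∀ c, G.Riem4 a b c d x * K x c = - (G.Riem4 a b d c x * K x c) := by
    intro c
    rw [G.Riem4_antisym_cd a b d c x]
    ring
  simp_rw [h1]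
  rw [Finset.sum_neg_distrib, G.Riem4_K_slot4 hKs hpar x a b d]
  ring

lemma Riem4_K_slot1 (hKs : SmoothVF K) (hpar : ∀ x a b, G.covVec K a b x = 0)
    (x : Pt n) (b c d : Fin n) :
    (∑ a, G.Riem4 a b c d x * K x a) = 0 := by
  have h1 : ∀ a, G.Riem4 a b c d x * K x a = G.Riem4 c d a b x * K x a := by
    intro a; rw [G.Riem4_pair]
  simp_rw [h1]
  exact G.Riem4_K_slot3 hKs hpar x c d b

lemma Riem4_K_slot2 (hKs : SmoothVF K) (hpar : ∀ x a b, G.covVec K a b x = 0)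
    (x : Pt n) (a c d : Fin n) :
    (∑ b, G.Riem4 a b c d x * K x b) = 0 := by
  have h1 : ∀ b, G.Riem4 a b c d x * K x b = G.Riem4 c d a b x * K x b := by
    intro b; rw [G.Riem4_pair]
  simp_rw [h1]
  exact G.Riem4_K_slot4 hKs hpar x c d a

end Parallel

lemma Riem_from_Riem4 (a b c d : Fin n) (x : Pt n) :
    G.Riem a b c d x = ∑ f, G.ginv x c f * G.Riem4 a b f d x := by
  unfold Riem4
  have h1 : ∀ f, G.ginv x c f * ∑ e, G.g x f e * G.Riem a b e d x
      = ∑ e, G.ginv x c f * G.g x f e * G.Riem a b e d x := by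
    intro f
    rw [Finset.mul_sum]
    exact Finset.sum_congr rfl fun e _ => by ring
  simp_rw [h1]
  rw [Finset.sum_comm]
  have h2 : ∀ e, (∑ f, G.ginv x c f * G.g x f e * G.Riem a b e d x)
      = (if c = e then (1:ℝ) else 0) * G.Riem a b e d x := by
    intro e
    rw [← Finset.sum_mul, G.inv_mul]
  simp_rw [h2]
  exact (dsum₁ (fun e => G.Riem a b e d x) c).symm

lemma Ricci_eq (b d : Fin n) (x : Pt n) :
    G.Ricci b d x = ∑ c, ∑ f, G.ginv x c f * G.Riem4 c b f d x := by
  unfold Ricci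
  exact Finset.sum_congr rfl fun c _ => G.Riem_from_Riem4 c b c d x

lemma Ricci_symm (b d : Fin n) (x : Pt n) : G.Ricci b d x = G.Ricci d b x := by
  rw [G.Ricci_eq b d x, G.Ricci_eq d b x]
  have h1 : ∀ c f, G.ginv x c f * G.Riem4 c b f d x = G.ginv x c f * G.Riem4 f d c b x := by
    intro c f; rw [G.Riem4_pair c b f d x]
  simp_rw [h1]
  rw [Finset.sum_comm]
  exact Finset.sum_congr rfl fun c _ => Finset.sum_congr rfl fun f _ => by
    rw [G.ginv_symm x f c]

lemma Schouten_symm (a b : Fin n) (x : Pt n) : G.Schouten a b x = G.Schouten b a x := by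
  unfold Schouten
  rw [G.Ricci_symm a b x, G.symm x a b]

end MetricG

namespace MetricG

variable {n : ℕ} (G : MetricG n)

/-- Index lowering at a point. -/
def low (x : Pt n) (X : Fin n → ℝ) (a : Fin n) : ℝ := ∑ b, G.g x a b * X b

/-- Schouten contraction on the first index. -/
def Pc (x : Pt n) (X : Fin n → ℝ) (d : Fin n) : ℝ := ∑ a, G.Schouten a d x * X a

lemma ip_eq_low (x : Pt n) (X Y : Fin n → ℝ) :
    G.ip x X Y = ∑ b, G.low x X b * Y b := by
  unfold ip low
  rw [Finset.sum_comm]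
  refine Finset.sum_congr rfl fun b _ => ?_
  rw [Finset.sum_mul]
  exact Finset.sum_congr rfl fun a _ => by rw [G.symm x a b]

lemma low_swap (x : Pt n) (v w : Fin n → ℝ) :
    (∑ a, G.low x v a * w a) = ∑ a, G.low x w a * v a := by
  rw [← G.ip_eq_low x v w, ← G.ip_eq_low x w v]
  unfold ip
  rw [Finset.sum_comm]
  exact Finset.sum_congr rfl fun a _ =>
    Finset.sum_congr rfl fun b _ => by rw [G.symm x a b]; ring

lemma Pc_swap (x : Pt n) (v w : Fin n → ℝ) :
    (∑ c, G.Pc x v c * w c) = ∑ c, G.Pc x w c * v c := by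
  unfold Pc
  simp only [Finset.sum_mul]
  rw [Finset.sum_comm]
  exact Finset.sum_congr rfl fun a _ =>
    Finset.sum_congr rfl fun c _ => by rw [G.Schouten_symm a c x]; ring

lemma raise_low (x : Pt n) (X : Fin n → ℝ) (c : Fin n) :
    (∑ f, G.ginv x c f * G.low x X f) = X c := by
  unfold low
  have h1 : ∀ f, G.ginv x c f * ∑ b, G.g x f b * X b
      = ∑ b, G.ginv x c f * G.g x f b * X b := by
    intro f; rw [Finset.mul_sum]; exact Finset.sum_congr rfl fun b _ => by ring
  simp_rw [h1]
  rw [Finset.sum_comm]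
  have h2 : ∀ b, (∑ f, G.ginv x c f * G.g x f b * X b)
      = (if c = b then (1:ℝ) else 0) * X b := by
    intro b; rw [← Finset.sum_mul, G.inv_mul]
  simp_rw [h2]
  exact dsum₁ _ c

lemma raise_low' (x : Pt n) (X : Fin n → ℝ) (f : Fin n) :
    (∑ c, G.ginv x c f * G.low x X c) = X f := by
  have h1 : ∀ c, G.ginv x c f * G.low x X c = G.ginv x f c * G.low x X c :=
    fun c => by rw [G.ginv_symm x c f]
  simp_rw [h1]
  exact G.raise_low x X f

lemma low_ne_zero (x : Pt n) (X : Fin n → ℝ) (hX : X ≠ 0) : G.low x X ≠ 0 := by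
  intro h
  apply hX
  funext c
  have h1 := G.raise_low x X c
  rw [h] at h1
  simpa using h1.symm

lemma gi_low₁ (x : Pt n) (w B : Fin n → ℝ) :
    (∑ c, ∑ f, G.ginv x c f * (G.low x w c * B f)) = ∑ f, w f * B f := by
  rw [Finset.sum_comm]
  refine Finset.sum_congr rfl fun f _ => ?_
  calc (∑ c, G.ginv x c f * (G.low x w c * B f))
      = (∑ c, G.ginv x c f * G.low x w c) * B f := by
        rw [Finset.sum_mul]; exact Finset.sum_congr rfl fun c _ => by ring
    _ = w f * B f := by rw [G.raise_low']

lemma gi_low₂ (x : Pt n) (w A : Fin n → ℝ) :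
    (∑ c, ∑ f, G.ginv x c f * (A c * G.low x w f)) = ∑ c, A c * w c := by
  refine Finset.sum_congr rfl fun c _ => ?_
  calc (∑ f, G.ginv x c f * (A c * G.low x w f))
      = A c * ∑ f, G.ginv x c f * G.low x w f := by
        rw [Finset.mul_sum]; exact Finset.sum_congr rfl fun f _ => by ring
    _ = A c * w c := by rw [G.raise_low]

lemma gi_gg_trace (x : Pt n) (s : ℝ) :
    (∑ c, ∑ f, G.ginv x c f * (G.g x f c * s)) = (n : ℝ) * s := by
  have h1 : ∀ c, (∑ f, G.ginv x c f * (G.g x f c * s)) = s := by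
    intro c
    calc (∑ f, G.ginv x c f * (G.g x f c * s))
        = (∑ f, G.ginv x c f * G.g x f c) * s := by
          rw [Finset.sum_mul]; exact Finset.sum_congr rfl fun f _ => by ring
      _ = s := by rw [G.inv_mul x c c]; simp
  simp_rw [h1]
  simp [Finset.sum_const, Finset.card_univ, nsmul_eq_mul]

lemma gi_gg_right (x : Pt n) (d : Fin n) (B : Fin n → ℝ) :
    (∑ c, ∑ f, G.ginv x c f * (G.g x d c * B f)) = B d := by
  rw [Finset.sum_comm]
  have h1 : ∀ f, (∑ c, G.ginv x c f * (G.g x d c * B f))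
      = (if f = d then (1:ℝ) else 0) * B f := by
    intro f
    calc (∑ c, G.ginv x c f * (G.g x d c * B f))
        = (∑ c, G.ginv x f c * G.g x c d) * B f := by
          rw [Finset.sum_mul]
          exact Finset.sum_congr rfl fun c _ => by
            rw [G.ginv_symm x c f, G.symm x d c]; ring
      _ = (if f = d then (1:ℝ) else 0) * B f := by rw [G.inv_mul x f d]
  simp_rw [h1]
  exact dsum₂ _ d

lemma sum_factor {m : ℕ} (v w : Fin m → ℝ) (s : ℝ) :
    (∑ i, v i * (w i * s)) = (∑ i, v i * w i) * s := by
  rw [Finset.sum_mul]; exact Finset.sum_congr rfl fun i _ => by ring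

section CoreCtx

variable (x : Pt n) (Kv L : Fin n → ℝ)

/-- Projection onto the orthogonal complement of `K` along `L`. -/
def πv (c : Fin n) : Fin n → ℝ :=
  fun p => (if c = p then (1:ℝ) else 0) - G.low x Kv c * L p

lemma sum_π_apply (c : Fin n) (F : Fin n → ℝ) :
    (∑ p, G.πv x Kv L c p * F p) = F c - G.low x Kv c * ∑ p, L p * F p := by
  unfold πv
  simp only [sub_mul, Finset.sum_sub_distrib]
  rw [dsum₁ F c, Finset.mul_sum]
  congr 1
  exact Finset.sum_congr rfl fun p _ => by ring

lemma low_π (c q : Fin n) :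
    G.low x (G.πv x Kv L c) q = G.g x q c - G.low x Kv c * G.low x L q := by
  have h0 : G.low x (G.πv x Kv L c) q = ∑ p, G.πv x Kv L c p * G.g x q p := by
    unfold low
    exact Finset.sum_congr rfl fun b _ => by ring
  have h1 : (∑ p, L p * G.g x q p) = G.low x L q := by
    unfold low
    exact Finset.sum_congr rfl fun p _ => mul_comm _ _
  rw [h0, G.sum_π_apply x Kv L c (fun p => G.g x q p), h1]

lemma π_orthK (hKL : (∑ b, G.low x Kv b * L b) = 1) (c : Fin n) :
    (∑ b, G.low x Kv b * G.πv x Kv L c b) = 0 := by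
  unfold πv
  simp only [mul_sub, Finset.sum_sub_distrib]
  have h1 : (∑ b, G.low x Kv b * (if c = b then (1:ℝ) else 0)) = G.low x Kv c := by simp
  have h2 : (∑ b, G.low x Kv b * (G.low x Kv c * L b))
      = G.low x Kv c * ∑ b, G.low x Kv b * L b := by
    rw [Finset.mul_sum]; exact Finset.sum_congr rfl fun b _ => by ring
  rw [h1, h2, hKL]
  ring

lemma Pc_π (c d : Fin n) :
    G.Pc x (G.πv x Kv L c) d = G.Schouten c d x - G.low x Kv c * G.Pc x L d := by
  unfold Pc
  have h1 : ∀ a, G.Schouten a d x * G.πv x Kv L c a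
      = G.πv x Kv L c a * G.Schouten a d x := fun a => by ring
  simp_rw [h1]
  rw [G.sum_π_apply x Kv L c (fun a => G.Schouten a d x)]
  congr 1
  congr 1
  exact Finset.sum_congr rfl fun p _ => mul_comm _ _

/-- Key trace-projection identity: the `g⁻¹` trace of a 2-tensor that is
annihilated by `K` in both slots can be computed through the projections. -/
lemma trace_proj (hKlK : (∑ a, G.low x Kv a * Kv a) = 0)
    (T : Fin n → Fin n → ℝ)
    (hTK1 : ∀ q, (∑ p, T p q * Kv p) = 0)
    (hTK2 : ∀ p, (∑ q, T p q * Kv q) = 0) :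
    (∑ c, ∑ f, G.ginv x c f * T c f)
      = ∑ c, ∑ f, G.ginv x c f * (∑ p, ∑ q, G.πv x Kv L c p * G.πv x Kv L f q * T p q) := by
  have hinner : ∀ c f, (∑ p, ∑ q, G.πv x Kv L c p * G.πv x Kv L f q * T p q)
      = T c f - G.low x Kv f * (∑ q, L q * T c q)
        - G.low x Kv c * (∑ p, L p * T p f)
        + G.low x Kv c * (G.low x Kv f * (∑ p, L p * ∑ q, L q * T p q)) := by
    intro c f
    have h1 : ∀ p, (∑ q, G.πv x Kv L c p * G.πv x Kv L f q * T p q)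
        = G.πv x Kv L c p * (T p f - G.low x Kv f * ∑ q, L q * T p q) := by
      intro p
      have : ∀ q, G.πv x Kv L c p * G.πv x Kv L f q * T p q
          = G.πv x Kv L c p * (G.πv x Kv L f q * T p q) := fun q => by ring
      simp_rw [this]
      rw [← Finset.mul_sum, G.sum_π_apply x Kv L f (fun q => T p q)]
    simp_rw [h1]
    rw [G.sum_π_apply x Kv L c (fun p => T p f - G.low x Kv f * ∑ q, L q * T p q)]
    have h2 : (∑ p, L p * (T p f - G.low x Kv f * ∑ q, L q * T p q))
        = (∑ p, L p * T p f) - G.low x Kv f * ∑ p, L p * ∑ q, L q * T p q := by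
      simp only [mul_sub, Finset.sum_sub_distrib]
      congr 1
      rw [Finset.mul_sum]
      exact Finset.sum_congr rfl fun p _ => by ring
    rw [h2]
    ring
  simp_rw [hinner]
  simp only [mul_sub, mul_add, Finset.sum_sub_distrib, Finset.sum_add_distrib]
  have e2 : (∑ c, ∑ f, G.ginv x c f * (G.low x Kv f * (∑ q, L q * T c q))) = 0 := by
    have h : ∀ c f, G.ginv x c f * (G.low x Kv f * (∑ q, L q * T c q))
        = G.ginv x c f * ((∑ q, L q * T c q) * G.low x Kv f) := fun c f => by ring
    simp_rw [h]
    rw [G.gi_low₂ x Kv (fun c => ∑ q, L q * T c q)]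
    have h3 : ∀ c, (∑ q, L q * T c q) * Kv c = ∑ q, L q * (T c q * Kv c) := by
      intro c; rw [Finset.sum_mul]; exact Finset.sum_congr rfl fun q _ => by ring
    simp_rw [h3]
    rw [Finset.sum_comm]
    have h4 : ∀ q, (∑ c, L q * (T c q * Kv c)) = L q * ∑ c, T c q * Kv c := by
      intro q; rw [Finset.mul_sum]
    simp_rw [h4, hTK1]
    simp
  have e3 : (∑ c, ∑ f, G.ginv x c f * (G.low x Kv c * (∑ p, L p * T p f))) = 0 := by
    rw [G.gi_low₁ x Kv (fun f => ∑ p, L p * T p f)]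
    have h3 : ∀ f, Kv f * (∑ p, L p * T p f) = ∑ p, L p * (T p f * Kv f) := by
      intro f; rw [Finset.mul_sum]; exact Finset.sum_congr rfl fun p _ => by ring
    simp_rw [h3]
    rw [Finset.sum_comm]
    have h4 : ∀ p, (∑ f, L p * (T p f * Kv f)) = L p * ∑ f, T p f * Kv f := by
      intro p; rw [Finset.mul_sum]
    simp_rw [h4, hTK2]
    simp
  have e4 : (∑ c, ∑ f, G.ginv x c f * (G.low x Kv c * (G.low x Kv f * (∑ p, L p * ∑ q, L q * T p q)))) = 0 := by
    rw [G.gi_low₁ x Kv (fun f' => G.low x Kv f' * (∑ p, L p * ∑ q, L q * T p q))]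
    rw [sum_factor Kv (fun f => G.low x Kv f) (∑ p, L p * ∑ q, L q * T p q)]
    have : (∑ f, Kv f * G.low x Kv f) = 0 := by
      rw [show (∑ f, Kv f * G.low x Kv f) = ∑ f, G.low x Kv f * Kv f from
        Finset.sum_congr rfl fun f _ => by ring]
      exact hKlK
    rw [this, zero_mul]
  rw [e2, e3, e4]
  ring

end CoreCtx

end MetricG

namespace MetricG

variable {n : ℕ} (G : MetricG n)

lemma sum_factor' {m : ℕ} (v w : Fin m → ℝ) (s : ℝ) :
    (∑ i, (v i * s) * w i) = (∑ i, v i * w i) * s := by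
  rw [Finset.sum_mul]; exact Finset.sum_congr rfl fun i _ => by ring

lemma sum2_factor (x : Pt n) (M : Fin n → Fin n → ℝ) (s : ℝ) :
    (∑ c, ∑ f, G.ginv x c f * (M c f * s)) = (∑ c, ∑ f, G.ginv x c f * M c f) * s := by
  rw [Finset.sum_mul]
  refine Finset.sum_congr rfl fun c _ => ?_
  rw [Finset.sum_mul]
  exact Finset.sum_congr rfl fun f _ => by ring

lemma Ric_contract_eq (x : Pt n) (Y : Fin n → ℝ) (d : Fin n) :
    (∑ b, G.Ricci b d x * Y b)
      = ∑ c, ∑ f, G.ginv x c f * (∑ b, G.Riem4 c b f d x * Y b) := by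
  have h1 : ∀ b, G.Ricci b d x * Y b
      = ∑ c, ∑ f, G.ginv x c f * (G.Riem4 c b f d x * Y b) := by
    intro b
    rw [G.Ricci_eq b d x, Finset.sum_mul]
    refine Finset.sum_congr rfl fun c _ => ?_
    rw [Finset.sum_mul]
    exact Finset.sum_congr rfl fun f _ => by ring
  simp_rw [h1]
  rw [Finset.sum_comm]
  refine Finset.sum_congr rfl fun c _ => ?_
  rw [Finset.sum_comm]
  exact Finset.sum_congr rfl fun f _ => (Finset.mul_sum _ _ _).symm

lemma Ric_K_zero (x : Pt n) (Kv : Fin n → ℝ)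
    (hs2 : ∀ a c d, (∑ b, G.Riem4 a b c d x * Kv b) = 0) (d : Fin n) :
    (∑ b, G.Ricci b d x * Kv b) = 0 := by
  rw [G.Ric_contract_eq x Kv d]
  have h1 : ∀ c f : Fin n, G.ginv x c f * (∑ b, G.Riem4 c b f d x * Kv b) = 0 := by
    intro c f; rw [hs2 c f d, mul_zero]
  simp_rw [h1]
  simp

lemma Weyl_contract (x : Pt n) (X Y : Fin n → ℝ) (c d : Fin n) :
    (∑ a, ∑ b, G.Weyl a b c d x * X a * Y b)
      = (∑ a, ∑ b, G.Riem4 a b c d x * X a * Y b)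
        - (G.low x X c * G.Pc x Y d - G.low x Y c * G.Pc x X d
           + G.low x Y d * G.Pc x X c - G.low x X d * G.Pc x Y c) := by
  have hexp : ∀ a b, G.Weyl a b c d x * X a * Y b
      = G.Riem4 a b c d x * X a * Y b
        - (G.g x c a * X a) * (G.Schouten b d x * Y b)
        + (G.g x c b * Y b) * (G.Schouten a d x * X a)
        - (G.g x d b * Y b) * (G.Schouten a c x * X a)
        + (G.g x d a * X a) * (G.Schouten b c x * Y b) := by
    intro a b; unfold Weyl; ring
  simp_rw [hexp]
  simp only [Finset.sum_add_distrib, Finset.sum_sub_distrib]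
  have e1 : (∑ a, ∑ b, (G.g x c a * X a) * (G.Schouten b d x * Y b))
      = G.low x X c * G.Pc x Y d := by
    rw [show G.low x X c * G.Pc x Y d
        = (∑ a, G.g x c a * X a) * (∑ b, G.Schouten b d x * Y b) from rfl]
    rw [Finset.sum_mul_sum]
  have e2 : (∑ a, ∑ b, (G.g x c b * Y b) * (G.Schouten a d x * X a))
      = G.low x Y c * G.Pc x X d := by
    have h : ∀ a, (∑ b, (G.g x c b * Y b) * (G.Schouten a d x * X a))
        = (G.Schouten a d x * X a) * ∑ b, G.g x c b * Y b := by
      intro a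
      rw [Finset.mul_sum]
      exact Finset.sum_congr rfl fun b _ => by ring
    simp_rw [h]
    rw [← Finset.sum_mul]
    rw [show (∑ a, G.Schouten a d x * X a) = G.Pc x X d from rfl]
    rw [show (∑ b, G.g x c b * Y b) = G.low x Y c from rfl]
    ring
  have e3 : (∑ a, ∑ b, (G.g x d b * Y b) * (G.Schouten a c x * X a))
      = G.low x Y d * G.Pc x X c := by
    have h : ∀ a, (∑ b, (G.g x d b * Y b) * (G.Schouten a c x * X a))
        = (G.Schouten a c x * X a) * ∑ b, G.g x d b * Y b := by
      intro a
      rw [Finset.mul_sum]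
      exact Finset.sum_congr rfl fun b _ => by ring
    simp_rw [h]
    rw [← Finset.sum_mul]
    rw [show (∑ a, G.Schouten a c x * X a) = G.Pc x X c from rfl]
    rw [show (∑ b, G.g x d b * Y b) = G.low x Y d from rfl]
    ring
  have e4 : (∑ a, ∑ b, (G.g x d a * X a) * (G.Schouten b c x * Y b))
      = G.low x X d * G.Pc x Y c := by
    rw [show G.low x X d * G.Pc x Y c
        = (∑ a, G.g x d a * X a) * (∑ b, G.Schouten b c x * Y b) from rfl]
    rw [Finset.sum_mul_sum]
  rw [e1, e2, e3, e4]
  ring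

end MetricG

namespace MetricG

variable {n : ℕ} (G : MetricG n)

lemma ric_Y_identity (x : Pt n) (Kv L Y : Fin n → ℝ)
    (hKL : (∑ b, G.low x Kv b * L b) = 1)
    (hKlK : (∑ a, G.low x Kv a * Kv a) = 0)
    (hs1 : ∀ b c d, (∑ a, G.Riem4 a b c d x * Kv a) = 0)
    (hs3 : ∀ a b d, (∑ c, G.Riem4 a b c d x * Kv c) = 0)
    (hW' : ∀ X Z : Fin n → ℝ, (∑ b, G.low x Kv b * X b) = 0 →
      (∑ b, G.low x Kv b * Z b) = 0 → ∀ c d,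
      (∑ a, ∑ b, G.Riem4 a b c d x * X a * Z b)
        = G.low x X c * G.Pc x Z d - G.low x Z c * G.Pc x X d
          + G.low x Z d * G.Pc x X c - G.low x X d * G.Pc x Z c)
    (hY : (∑ b, G.low x Kv b * Y b) = 0) (d : Fin n) :
    (∑ b, G.Ricci b d x * Y b)
      = ((n:ℝ) - 4) * G.Pc x Y d
        + (∑ q, L q * G.low x Y q) * G.Pc x Kv d
        + (∑ q, L q * G.Pc x Y q) * G.low x Kv d
        + (∑ a, G.Pc x Kv a * Y a) * G.low x L d
        + ((∑ c, ∑ f, G.ginv x c f * G.Schouten c f x) - 2 * ∑ a, G.Pc x Kv a * L a)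
          * G.low x Y d := by
  have hKvLL : (∑ i, Kv i * G.low x L i) = 1 := by
    rw [show (∑ i, Kv i * G.low x L i) = ∑ i, G.low x L i * Kv i from
      Finset.sum_congr rfl fun i _ => mul_comm _ _, G.low_swap x L Kv, hKL]
  have hKvKl : (∑ i, Kv i * G.low x Kv i) = 0 := by
    rw [show (∑ i, Kv i * G.low x Kv i) = ∑ i, G.low x Kv i * Kv i from
      Finset.sum_congr rfl fun i _ => mul_comm _ _, hKlK]
  have hKvYl : (∑ i, Kv i * G.low x Y i) = 0 := by
    rw [show (∑ i, Kv i * G.low x Y i) = ∑ i, G.low x Y i * Kv i from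
      Finset.sum_congr rfl fun i _ => mul_comm _ _, G.low_swap x Y Kv, hY]
  have hLg : ∀ c, (∑ q, L q * G.g x q c) = G.low x L c := by
    intro c
    unfold low
    exact Finset.sum_congr rfl fun q _ => by rw [G.symm x q c]; exact mul_comm _ _
  have hLPP : ∀ c, (∑ q, L q * G.Schouten c q x) = G.Pc x L c := by
    intro c
    unfold Pc
    exact Finset.sum_congr rfl fun q _ => by rw [G.Schouten_symm c q x]; exact mul_comm _ _
  have hTK1 : ∀ q, (∑ p, (∑ b, G.Riem4 p b q d x * Y b) * Kv p) = 0 := by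
    intro q
    have h1 : ∀ p, (∑ b, G.Riem4 p b q d x * Y b) * Kv p
        = ∑ b, (G.Riem4 p b q d x * Kv p) * Y b := by
      intro p; rw [Finset.sum_mul]; exact Finset.sum_congr rfl fun b _ => by ring
    simp_rw [h1]
    rw [Finset.sum_comm]
    have h2 : ∀ b, (∑ p, (G.Riem4 p b q d x * Kv p) * Y b)
        = (∑ p, G.Riem4 p b q d x * Kv p) * Y b := fun b => by rw [Finset.sum_mul]
    simp_rw [h2, hs1]
    simp
  have hTK2 : ∀ p, (∑ q, (∑ b, G.Riem4 p b q d x * Y b) * Kv q) = 0 := by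
    intro p
    have h1 : ∀ q, (∑ b, G.Riem4 p b q d x * Y b) * Kv q
        = ∑ b, (G.Riem4 p b q d x * Kv q) * Y b := by
      intro q; rw [Finset.sum_mul]; exact Finset.sum_congr rfl fun b _ => by ring
    simp_rw [h1]
    rw [Finset.sum_comm]
    have h2 : ∀ b, (∑ q, (G.Riem4 p b q d x * Kv q) * Y b)
        = (∑ q, G.Riem4 p b q d x * Kv q) * Y b := fun b => by rw [Finset.sum_mul]
    simp_rw [h2, hs3]
    simp
  have hcT : ∀ c q, (∑ p, G.πv x Kv L c p * ∑ b, G.Riem4 p b q d x * Y b)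
      = G.low x (G.πv x Kv L c) q * G.Pc x Y d
        - G.low x Y q * G.Pc x (G.πv x Kv L c) d
        + G.low x Y d * G.Pc x (G.πv x Kv L c) q
        - G.low x (G.πv x Kv L c) d * G.Pc x Y q := by
    intro c q
    have h0 : (∑ p, G.πv x Kv L c p * ∑ b, G.Riem4 p b q d x * Y b)
        = ∑ p, ∑ b, G.Riem4 p b q d x * G.πv x Kv L c p * Y b := by
      refine Finset.sum_congr rfl fun p _ => ?_
      rw [Finset.mul_sum]
      exact Finset.sum_congr rfl fun b _ => by ring
    rw [h0]
    exact hW' (G.πv x Kv L c) Y (G.π_orthK x Kv L hKL c) hY q d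
  have hq1 : ∀ c f, (∑ q, G.πv x Kv L f q * G.low x (G.πv x Kv L c) q)
      = (G.g x f c - G.low x Kv c * G.low x L f)
        - G.low x Kv f * (G.low x L c - G.low x Kv c * ∑ q, L q * G.low x L q) := by
    intro c f
    rw [G.sum_π_apply x Kv L f (fun q => G.low x (G.πv x Kv L c) q)]
    rw [G.low_π x Kv L c f]
    have h2 : (∑ q, L q * G.low x (G.πv x Kv L c) q)
        = G.low x L c - G.low x Kv c * ∑ q, L q * G.low x L q := by
      have h3 : ∀ q, L q * G.low x (G.πv x Kv L c) q
          = L q * G.g x q c - G.low x Kv c * (L q * G.low x L q) := by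
        intro q; rw [G.low_π x Kv L c q]; ring
      simp_rw [h3]
      rw [Finset.sum_sub_distrib, hLg c, ← Finset.mul_sum]
    rw [h2]
  have hq2 : ∀ f, (∑ q, G.πv x Kv L f q * G.low x Y q)
      = G.low x Y f - G.low x Kv f * ∑ q, L q * G.low x Y q :=
    fun f => G.sum_π_apply x Kv L f (fun q => G.low x Y q)
  have hq4 : ∀ f, (∑ q, G.πv x Kv L f q * G.Pc x Y q)
      = G.Pc x Y f - G.low x Kv f * ∑ q, L q * G.Pc x Y q :=
    fun f => G.sum_π_apply x Kv L f (fun q => G.Pc x Y q)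
  have hq3 : ∀ c f, (∑ q, G.πv x Kv L f q * G.Pc x (G.πv x Kv L c) q)
      = (G.Schouten c f x - G.low x Kv c * G.Pc x L f)
        - G.low x Kv f * (G.Pc x L c - G.low x Kv c * ∑ q, L q * G.Pc x L q) := by
    intro c f
    rw [G.sum_π_apply x Kv L f (fun q => G.Pc x (G.πv x Kv L c) q)]
    rw [G.Pc_π x Kv L c f]
    have h2 : (∑ q, L q * G.Pc x (G.πv x Kv L c) q)
        = G.Pc x L c - G.low x Kv c * ∑ q, L q * G.Pc x L q := by
      have h3 : ∀ q, L q * G.Pc x (G.πv x Kv L c) q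
          = L q * G.Schouten c q x - G.low x Kv c * (L q * G.Pc x L q) := by
        intro q; rw [G.Pc_π x Kv L c q]; ring
      simp_rw [h3]
      rw [Finset.sum_sub_distrib, hLPP c, ← Finset.mul_sum]
    rw [h2]
  have hinner : ∀ c f,
      (∑ p, ∑ q, G.πv x Kv L c p * G.πv x Kv L f q * (∑ b, G.Riem4 p b q d x * Y b))
      = G.g x f c * G.Pc x Y d
        - G.low x Kv c * (G.low x L f * G.Pc x Y d)
        - (G.low x L c * G.Pc x Y d) * G.low x Kv f
        + G.low x Kv c * (G.low x Kv f * ((∑ q, L q * G.low x L q) * G.Pc x Y d))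
        - G.Schouten c d x * G.low x Y f
        + (G.Schouten c d x * (∑ q, L q * G.low x Y q)) * G.low x Kv f
        + G.low x Kv c * (G.low x Y f * G.Pc x L d)
        - G.low x Kv c * (G.low x Kv f * ((∑ q, L q * G.low x Y q) * G.Pc x L d))
        + G.Schouten c f x * G.low x Y d
        - (G.Pc x L c * G.low x Y d) * G.low x Kv f
        - G.low x Kv c * (G.Pc x L f * G.low x Y d)
        + G.low x Kv c * (G.low x Kv f * ((∑ q, L q * G.Pc x L q) * G.low x Y d))
        - G.g x d c * G.Pc x Y f
        + G.g x d c * (G.low x Kv f * (∑ q, L q * G.Pc x Y q))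
        + G.low x Kv c * (G.Pc x Y f * G.low x L d)
        - G.low x Kv c * (G.low x Kv f * ((∑ q, L q * G.Pc x Y q) * G.low x L d)) := by
    intro c f
    have h0 : (∑ p, ∑ q, G.πv x Kv L c p * G.πv x Kv L f q * (∑ b, G.Riem4 p b q d x * Y b))
        = ∑ q, G.πv x Kv L f q * ∑ p, G.πv x Kv L c p * ∑ b, G.Riem4 p b q d x * Y b := by
      rw [Finset.sum_comm]
      refine Finset.sum_congr rfl fun q _ => ?_
      rw [Finset.mul_sum]
      exact Finset.sum_congr rfl fun p _ => by ring
    rw [h0]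
    simp_rw [hcT c]
    have h1 : ∀ q, G.πv x Kv L f q *
        (G.low x (G.πv x Kv L c) q * G.Pc x Y d
          - G.low x Y q * G.Pc x (G.πv x Kv L c) d
          + G.low x Y d * G.Pc x (G.πv x Kv L c) q
          - G.low x (G.πv x Kv L c) d * G.Pc x Y q)
        = (G.πv x Kv L f q * G.low x (G.πv x Kv L c) q) * G.Pc x Y d
          - (G.πv x Kv L f q * G.low x Y q) * G.Pc x (G.πv x Kv L c) d
          + G.low x Y d * (G.πv x Kv L f q * G.Pc x (G.πv x Kv L c) q)
          - G.low x (G.πv x Kv L c) d * (G.πv x Kv L f q * G.Pc x Y q) := fun q => by ring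
    simp_rw [h1]
    simp only [Finset.sum_add_distrib, Finset.sum_sub_distrib]
    rw [← Finset.sum_mul, ← Finset.sum_mul, ← Finset.mul_sum, ← Finset.mul_sum]
    rw [hq1 c f, hq2 f, hq3 c f, hq4 f, G.low_π x Kv L c d, G.Pc_π x Kv L c d]
    ring
  rw [G.Ric_contract_eq x Y d]
  rw [G.trace_proj x Kv L hKlK (fun p q => ∑ b, G.Riem4 p b q d x * Y b) hTK1 hTK2]
  simp_rw [hinner]
  simp only [mul_add, mul_sub, Finset.sum_add_distrib, Finset.sum_sub_distrib]
  have hm1 : (∑ c, ∑ f, G.ginv x c f * (G.g x f c * G.Pc x Y d))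
      = (n : ℝ) * G.Pc x Y d := G.gi_gg_trace x (G.Pc x Y d)
  have hm2 : (∑ c, ∑ f, G.ginv x c f * (G.low x Kv c * (G.low x L f * G.Pc x Y d)))
      = G.Pc x Y d := by
    rw [G.gi_low₁ x Kv (fun f => G.low x L f * G.Pc x Y d),
      sum_factor Kv (G.low x L) (G.Pc x Y d), hKvLL, one_mul]
  have hm3 : (∑ c, ∑ f, G.ginv x c f * ((G.low x L c * G.Pc x Y d) * G.low x Kv f))
      = G.Pc x Y d := by
    rw [G.gi_low₂ x Kv (fun c => G.low x L c * G.Pc x Y d),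
      sum_factor' (G.low x L) Kv (G.Pc x Y d), G.low_swap x L Kv, hKL, one_mul]
  have hm4 : (∑ c, ∑ f, G.ginv x c f *
      (G.low x Kv c * (G.low x Kv f * ((∑ q, L q * G.low x L q) * G.Pc x Y d)))) = 0 := by
    rw [G.gi_low₁ x Kv (fun f => G.low x Kv f * ((∑ q, L q * G.low x L q) * G.Pc x Y d)),
      sum_factor Kv (G.low x Kv) ((∑ q, L q * G.low x L q) * G.Pc x Y d), hKvKl, zero_mul]
  have hm5 : (∑ c, ∑ f, G.ginv x c f * (G.Schouten c d x * G.low x Y f))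
      = G.Pc x Y d := by
    rw [G.gi_low₂ x Y (fun c => G.Schouten c d x)]
    rfl
  have hm6 : (∑ c, ∑ f, G.ginv x c f *
      ((G.Schouten c d x * (∑ q, L q * G.low x Y q)) * G.low x Kv f))
      = G.Pc x Kv d * (∑ q, L q * G.low x Y q) := by
    rw [G.gi_low₂ x Kv (fun c => G.Schouten c d x * (∑ q, L q * G.low x Y q)),
      sum_factor' (fun c => G.Schouten c d x) Kv (∑ q, L q * G.low x Y q)]
    rfl
  have hm7 : (∑ c, ∑ f, G.ginv x c f * (G.low x Kv c * (G.low x Y f * G.Pc x L d))) = 0 := by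
    rw [G.gi_low₁ x Kv (fun f => G.low x Y f * G.Pc x L d),
      sum_factor Kv (G.low x Y) (G.Pc x L d), hKvYl, zero_mul]
  have hm8 : (∑ c, ∑ f, G.ginv x c f *
      (G.low x Kv c * (G.low x Kv f * ((∑ q, L q * G.low x Y q) * G.Pc x L d)))) = 0 := by
    rw [G.gi_low₁ x Kv (fun f => G.low x Kv f * ((∑ q, L q * G.low x Y q) * G.Pc x L d)),
      sum_factor Kv (G.low x Kv) ((∑ q, L q * G.low x Y q) * G.Pc x L d), hKvKl, zero_mul]
  have hm9 : (∑ c, ∑ f, G.ginv x c f * (G.Schouten c f x * G.low x Y d))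
      = (∑ c, ∑ f, G.ginv x c f * G.Schouten c f x) * G.low x Y d :=
    G.sum2_factor x (fun c f => G.Schouten c f x) (G.low x Y d)
  have hm10 : (∑ c, ∑ f, G.ginv x c f * ((G.Pc x L c * G.low x Y d) * G.low x Kv f))
      = (∑ a, G.Pc x Kv a * L a) * G.low x Y d := by
    rw [G.gi_low₂ x Kv (fun c => G.Pc x L c * G.low x Y d),
      sum_factor' (G.Pc x L) Kv (G.low x Y d), G.Pc_swap x L Kv]
  have hm11 : (∑ c, ∑ f, G.ginv x c f * (G.low x Kv c * (G.Pc x L f * G.low x Y d)))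
      = (∑ a, G.Pc x Kv a * L a) * G.low x Y d := by
    rw [G.gi_low₁ x Kv (fun f => G.Pc x L f * G.low x Y d),
      sum_factor Kv (G.Pc x L) (G.low x Y d),
      show (∑ i, Kv i * G.Pc x L i) = ∑ i, G.Pc x L i * Kv i from
        Finset.sum_congr rfl fun i _ => mul_comm _ _,
      G.Pc_swap x L Kv]
  have hm12 : (∑ c, ∑ f, G.ginv x c f *
      (G.low x Kv c * (G.low x Kv f * ((∑ q, L q * G.Pc x L q) * G.low x Y d)))) = 0 := by
    rw [G.gi_low₁ x Kv (fun f => G.low x Kv f * ((∑ q, L q * G.Pc x L q) * G.low x Y d)),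
      sum_factor Kv (G.low x Kv) ((∑ q, L q * G.Pc x L q) * G.low x Y d), hKvKl, zero_mul]
  have hm13 : (∑ c, ∑ f, G.ginv x c f * (G.g x d c * G.Pc x Y f)) = G.Pc x Y d :=
    G.gi_gg_right x d (G.Pc x Y)
  have hm14 : (∑ c, ∑ f, G.ginv x c f * (G.g x d c * (G.low x Kv f * (∑ q, L q * G.Pc x Y q))))
      = G.low x Kv d * (∑ q, L q * G.Pc x Y q) :=
    G.gi_gg_right x d (fun f => G.low x Kv f * (∑ q, L q * G.Pc x Y q))
  have hm15 : (∑ c, ∑ f, G.ginv x c f * (G.low x Kv c * (G.Pc x Y f * G.low x L d)))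
      = (∑ a, G.Pc x Kv a * Y a) * G.low x L d := by
    rw [G.gi_low₁ x Kv (fun f => G.Pc x Y f * G.low x L d),
      sum_factor Kv (G.Pc x Y) (G.low x L d),
      show (∑ i, Kv i * G.Pc x Y i) = ∑ i, G.Pc x Y i * Kv i from
        Finset.sum_congr rfl fun i _ => mul_comm _ _,
      G.Pc_swap x Y Kv]
  have hm16 : (∑ c, ∑ f, G.ginv x c f *
      (G.low x Kv c * (G.low x Kv f * ((∑ q, L q * G.Pc x Y q) * G.low x L d)))) = 0 := by
    rw [G.gi_low₁ x Kv (fun f => G.low x Kv f * ((∑ q, L q * G.Pc x Y q) * G.low x L d)),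
      sum_factor Kv (G.low x Kv) ((∑ q, L q * G.Pc x Y q) * G.low x L d), hKvKl, zero_mul]
  rw [hm1, hm2, hm3, hm4, hm5, hm6, hm7, hm8, hm9, hm10, hm11, hm12, hm13, hm14, hm15, hm16]
  ring

end MetricG

namespace MetricG

variable {n : ℕ} (G : MetricG n)

lemma exists_L (x : Pt n) (Kv : Fin n → ℝ) (hK0 : Kv ≠ 0) :
    ∃ L : Fin n → ℝ, (∑ b, G.low x Kv b * L b) = 1 := by
  obtain ⟨b0, hb0⟩ := Function.ne_iff.mp (G.low_ne_zero x Kv hK0)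
  have hb0' : G.low x Kv b0 ≠ 0 := by simpa using hb0
  refine ⟨fun p => if p = b0 then (G.low x Kv b0)⁻¹ else 0, ?_⟩
  have h1 : ∀ b, G.low x Kv b * (if b = b0 then (G.low x Kv b0)⁻¹ else 0)
      = if b = b0 then G.low x Kv b0 * (G.low x Kv b0)⁻¹ else 0 := by
    intro b
    by_cases h : b = b0
    · subst h; simp
    · simp [h]
  simp_rw [h1]
  rw [Finset.sum_ite_eq' Finset.univ b0 (fun _ => G.low x Kv b0 * (G.low x Kv b0)⁻¹)]
  simp [hb0']

theorem core (hn : 2 < n) (x : Pt n) (Kv : Fin n → ℝ) (hK0 : Kv ≠ 0)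
    (hnull : G.ip x Kv Kv = 0)
    (hs1 : ∀ b c d, (∑ a, G.Riem4 a b c d x * Kv a) = 0)
    (hs2 : ∀ a c d, (∑ b, G.Riem4 a b c d x * Kv b) = 0)
    (hs3 : ∀ a b d, (∑ c, G.Riem4 a b c d x * Kv c) = 0)
    (hWc : ∀ X Z : Fin n → ℝ, G.ip x Kv X = 0 → G.ip x Kv Z = 0 → ∀ c d,
      (∑ a, ∑ b, G.Riem4 a b c d x * X a * Z b)
        = G.low x X c * G.Pc x Z d - G.low x Z c * G.Pc x X d
          + G.low x Z d * G.Pc x X c - G.low x X d * G.Pc x Z c) :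
    G.Scal x = 0 ∧ ∀ X : Fin n → ℝ, G.ip x Kv X = 0 →
      ∀ b, (∑ a, G.Ricci a b x * X a) = 0 := by
  have h3n : (3 : ℝ) ≤ (n : ℝ) := by exact_mod_cast hn
  have hN2 : ((n : ℝ) - 2) ≠ 0 := by linarith
  have hN1 : (2 * ((n : ℝ) - 1)) ≠ 0 := by linarith
  have hKlK : (∑ a, G.low x Kv a * Kv a) = 0 := by
    rw [← G.ip_eq_low x Kv Kv]; exact hnull
  obtain ⟨L, hKL⟩ := G.exists_L x Kv hK0
  have horth : ∀ X : Fin n → ℝ, G.ip x Kv X = 0 ↔ (∑ b, G.low x Kv b * X b) = 0 := by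
    intro X
    rw [G.ip_eq_low x Kv X]
  have hW' : ∀ X Z : Fin n → ℝ, (∑ b, G.low x Kv b * X b) = 0 →
      (∑ b, G.low x Kv b * Z b) = 0 → ∀ c d,
      (∑ a, ∑ b, G.Riem4 a b c d x * X a * Z b)
        = G.low x X c * G.Pc x Z d - G.low x Z c * G.Pc x X d
          + G.low x Z d * G.Pc x X c - G.low x X d * G.Pc x Z c := by
    intro X Z hX hZ
    exact hWc X Z ((horth X).mpr hX) ((horth Z).mpr hZ)
  -- Ricci in terms of Schouten
  have hRicSch : ∀ a b, G.Ricci a b x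
      = ((n:ℝ) - 2) * G.Schouten a b x + G.Scal x / (2 * ((n:ℝ) - 1)) * G.g x a b := by
    intro a b
    unfold Schouten
    field_simp
    ring
  have hRicY_left : ∀ (Y : Fin n → ℝ) d, (∑ b, G.Ricci b d x * Y b)
      = ((n:ℝ) - 2) * G.Pc x Y d + G.Scal x / (2 * ((n:ℝ) - 1)) * G.low x Y d := by
    intro Y d
    have h1 : ∀ b, G.Ricci b d x * Y b
        = ((n:ℝ) - 2) * (G.Schouten b d x * Y b)
          + G.Scal x / (2 * ((n:ℝ) - 1)) * (G.g x d b * Y b) := by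
      intro b
      rw [hRicSch b d, G.symm x b d]
      ring
    simp_rw [h1]
    rw [Finset.sum_add_distrib, ← Finset.mul_sum, ← Finset.mul_sum]
    rw [show (∑ b, G.Schouten b d x * Y b) = G.Pc x Y d from rfl]
    rw [show (∑ b, G.g x d b * Y b) = G.low x Y d from rfl]
  have hPK : ∀ dd, G.Pc x Kv dd
      = -(G.Scal x / (2 * ((n:ℝ) - 1)) / ((n:ℝ) - 2)) * G.low x Kv dd := by
    intro dd
    have h0 := G.Ric_K_zero x Kv hs2 dd
    rw [hRicY_left Kv dd] at h0
    have h1 : ((n:ℝ) - 2) * G.Pc x Kv dd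
        = -(G.Scal x / (2 * ((n:ℝ) - 1)) * G.low x Kv dd) := by linarith
    have h2 : ((n:ℝ) - 2) * (-(G.Scal x / (2 * ((n:ℝ) - 1)) / ((n:ℝ) - 2)) * G.low x Kv dd)
        = -(G.Scal x / (2 * ((n:ℝ) - 1)) * G.low x Kv dd) := by
      field_simp
    exact mul_left_cancel₀ hN2 (by rw [h1, ← h2])
  have hPKL : (∑ a, G.Pc x Kv a * L a)
      = -(G.Scal x / (2 * ((n:ℝ) - 1)) / ((n:ℝ) - 2)) := by
    simp_rw [hPK]
    have h1 : ∀ a, -(G.Scal x / (2 * ((n:ℝ) - 1)) / ((n:ℝ) - 2)) * G.low x Kv a * L a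
        = -(G.Scal x / (2 * ((n:ℝ) - 1)) / ((n:ℝ) - 2)) * (G.low x Kv a * L a) := by
      intro a; ring
    simp_rw [h1]
    rw [← Finset.mul_sum, hKL, mul_one]
  have hgg : (∑ c, ∑ f, G.ginv x c f * G.g x c f) = (n : ℝ) := by
    have h2 : ∀ c, (∑ f, G.ginv x c f * G.g x c f) = 1 := by
      intro c
      calc (∑ f, G.ginv x c f * G.g x c f)
          = ∑ f, G.ginv x c f * G.g x f c :=
            Finset.sum_congr rfl fun f _ => by rw [G.symm x c f]
        _ = 1 := by rw [G.inv_mul x c c]; simp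
    simp_rw [h2]
    simp [Finset.card_univ]
  have htrP : (∑ c, ∑ f, G.ginv x c f * G.Schouten c f x)
      = G.Scal x / (2 * ((n:ℝ) - 1)) := by
    have h1 : ∀ c f, G.ginv x c f * G.Schouten c f x
        = (1 / ((n:ℝ) - 2)) * (G.ginv x c f * G.Ricci c f x)
          - (G.Scal x / (2 * ((n:ℝ) - 1)) / ((n:ℝ) - 2)) * (G.ginv x c f * G.g x c f) := by
      intro c f
      unfold Schouten
      ring
    simp_rw [h1, Finset.sum_sub_distrib, ← Finset.mul_sum]
    rw [show (∑ c, ∑ f, G.ginv x c f * G.Ricci c f x) = G.Scal x from rfl, hgg]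
    field_simp [show ((n:ℝ) - 1) ≠ 0 by linarith]
    ring
  -- the key pointwise identity, simplified
  have hID : ∀ Y : Fin n → ℝ, (∑ b, G.low x Kv b * Y b) = 0 → ∀ dd,
      2 * G.Pc x Y dd
        = ((∑ q, L q * G.Pc x Y q)
            - G.Scal x / (2 * ((n:ℝ) - 1)) / ((n:ℝ) - 2) * (∑ q, L q * G.low x Y q))
            * G.low x Kv dd
          + 2 * (G.Scal x / (2 * ((n:ℝ) - 1)) / ((n:ℝ) - 2)) * G.low x Y dd := by
    intro Y hY dd
    have h0 := G.ric_Y_identity x Kv L Y hKL hKlK hs1 hs3 hW' hY dd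
    rw [hRicY_left Y dd, htrP, hPKL, hPK dd] at h0
    have hPKY : (∑ a, G.Pc x Kv a * Y a) = 0 := by
      simp_rw [hPK]
      have h1 : ∀ a, -(G.Scal x / (2 * ((n:ℝ) - 1)) / ((n:ℝ) - 2)) * G.low x Kv a * Y a
          = -(G.Scal x / (2 * ((n:ℝ) - 1)) / ((n:ℝ) - 2)) * (G.low x Kv a * Y a) := by
        intro a; ring
      simp_rw [h1]
      rw [← Finset.mul_sum, hY, mul_zero]
    rw [hPKY] at h0
    linear_combination h0
  -- scalar curvature vanishes
  have hs0 : G.Scal x = 0 := by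
    have hdec : ∀ c f, G.Schouten c f x
        = G.Pc x (G.πv x Kv L c) f + G.low x Kv c * G.Pc x L f := by
      intro c f
      have h := G.Pc_π x Kv L c f
      linarith
    have htrP2 : (∑ c, ∑ f, G.ginv x c f * G.Schouten c f x)
        = (∑ c, ∑ f, G.ginv x c f * G.Pc x (G.πv x Kv L c) f)
          + ∑ c, ∑ f, G.ginv x c f * (G.low x Kv c * G.Pc x L f) := by
      have h1 : ∀ c f, G.ginv x c f * G.Schouten c f x
          = G.ginv x c f * G.Pc x (G.πv x Kv L c) f
            + G.ginv x c f * (G.low x Kv c * G.Pc x L f) := by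
        intro c f; rw [hdec c f]; ring
      simp_rw [h1, Finset.sum_add_distrib]
    have hpart2 : (∑ c, ∑ f, G.ginv x c f * (G.low x Kv c * G.Pc x L f))
        = -(G.Scal x / (2 * ((n:ℝ) - 1)) / ((n:ℝ) - 2)) := by
      rw [G.gi_low₁ x Kv (fun f => G.Pc x L f)]
      rw [show (∑ f, Kv f * G.Pc x L f) = ∑ f, G.Pc x L f * Kv f from
        Finset.sum_congr rfl fun f _ => mul_comm _ _]
      rw [G.Pc_swap x L Kv, hPKL]
    -- compute 2 * (first part)
    have hβc : ∀ c, (∑ q, L q * G.Pc x (G.πv x Kv L c) q)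
        = G.Pc x L c - G.low x Kv c * ∑ q, L q * G.Pc x L q := by
      intro c
      have h3 : ∀ q, L q * G.Pc x (G.πv x Kv L c) q
          = L q * G.Schouten c q x - G.low x Kv c * (L q * G.Pc x L q) := by
        intro q; rw [G.Pc_π x Kv L c q]; ring
      simp_rw [h3]
      rw [Finset.sum_sub_distrib, ← Finset.mul_sum]
      congr 1
      unfold Pc
      exact Finset.sum_congr rfl fun q _ => by
        rw [G.Schouten_symm c q x]; exact mul_comm _ _
    have hαc : ∀ c, (∑ q, L q * G.low x (G.πv x Kv L c) q)
        = G.low x L c - G.low x Kv c * ∑ q, L q * G.low x L q := by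
      intro c
      have h3 : ∀ q, L q * G.low x (G.πv x Kv L c) q
          = L q * G.g x q c - G.low x Kv c * (L q * G.low x L q) := by
        intro q; rw [G.low_π x Kv L c q]; ring
      simp_rw [h3]
      rw [Finset.sum_sub_distrib, ← Finset.mul_sum]
      congr 1
      unfold low
      exact Finset.sum_congr rfl fun q _ => by rw [G.symm x q c]; exact mul_comm _ _
    have hpart1 : 2 * (∑ c, ∑ f, G.ginv x c f * G.Pc x (G.πv x Kv L c) f)
        = -2 * (G.Scal x / (2 * ((n:ℝ) - 1)) / ((n:ℝ) - 2))
          + 2 * (G.Scal x / (2 * ((n:ℝ) - 1)) / ((n:ℝ) - 2)) * ((n : ℝ) - 1) := by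
      have h1 : ∀ c f, 2 * (G.ginv x c f * G.Pc x (G.πv x Kv L c) f)
          = G.ginv x c f * (2 * G.Pc x (G.πv x Kv L c) f) := by intro c f; ring
      rw [Finset.mul_sum]
      have h2 : ∀ c, 2 * (∑ f, G.ginv x c f * G.Pc x (G.πv x Kv L c) f)
          = ∑ f, G.ginv x c f * (2 * G.Pc x (G.πv x Kv L c) f) := by
        intro c
        rw [Finset.mul_sum]
        exact Finset.sum_congr rfl fun f _ => by ring
      simp_rw [h2]
      have h3 : ∀ c f, G.ginv x c f * (2 * G.Pc x (G.πv x Kv L c) f)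
          = G.ginv x c f * (((∑ q, L q * G.Pc x (G.πv x Kv L c) q)
              - G.Scal x / (2 * ((n:ℝ) - 1)) / ((n:ℝ) - 2)
                * (∑ q, L q * G.low x (G.πv x Kv L c) q)) * G.low x Kv f)
            + G.ginv x c f * (2 * (G.Scal x / (2 * ((n:ℝ) - 1)) / ((n:ℝ) - 2))
                * G.low x (G.πv x Kv L c) f) := by
        intro c f
        rw [hID (G.πv x Kv L c) (G.π_orthK x Kv L hKL c) f]
        ring
      simp_rw [h3, Finset.sum_add_distrib]
      have h4 : (∑ c, ∑ f, G.ginv x c f * (((∑ q, L q * G.Pc x (G.πv x Kv L c) q)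
              - G.Scal x / (2 * ((n:ℝ) - 1)) / ((n:ℝ) - 2)
                * (∑ q, L q * G.low x (G.πv x Kv L c) q)) * G.low x Kv f))
          = -2 * (G.Scal x / (2 * ((n:ℝ) - 1)) / ((n:ℝ) - 2)) := by
        rw [G.gi_low₂ x Kv (fun c => (∑ q, L q * G.Pc x (G.πv x Kv L c) q)
            - G.Scal x / (2 * ((n:ℝ) - 1)) / ((n:ℝ) - 2)
              * (∑ q, L q * G.low x (G.πv x Kv L c) q))]
        have h5 : ∀ c, ((∑ q, L q * G.Pc x (G.πv x Kv L c) q)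
            - G.Scal x / (2 * ((n:ℝ) - 1)) / ((n:ℝ) - 2)
              * (∑ q, L q * G.low x (G.πv x Kv L c) q)) * Kv c
            = G.Pc x L c * Kv c
              - (∑ q, L q * G.Pc x L q) * (G.low x Kv c * Kv c)
              - G.Scal x / (2 * ((n:ℝ) - 1)) / ((n:ℝ) - 2) * (G.low x L c * Kv c)
              + G.Scal x / (2 * ((n:ℝ) - 1)) / ((n:ℝ) - 2)
                * ((∑ q, L q * G.low x L q) * (G.low x Kv c * Kv c)) := by
          intro c
          rw [hβc c, hαc c]
          ring
        simp_rw [h5]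
        simp only [Finset.sum_sub_distrib, Finset.sum_add_distrib]
        have t1 : (∑ c, G.Pc x L c * Kv c)
            = -(G.Scal x / (2 * ((n:ℝ) - 1)) / ((n:ℝ) - 2)) := by
          rw [G.Pc_swap x L Kv, hPKL]
        have t2 : (∑ c, (∑ q, L q * G.Pc x L q) * (G.low x Kv c * Kv c)) = 0 := by
          rw [← Finset.mul_sum, hKlK, mul_zero]
        have t3 : (∑ c, G.Scal x / (2 * ((n:ℝ) - 1)) / ((n:ℝ) - 2) * (G.low x L c * Kv c))
            = G.Scal x / (2 * ((n:ℝ) - 1)) / ((n:ℝ) - 2) := by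
          rw [← Finset.mul_sum, G.low_swap x L Kv, hKL, mul_one]
        have t4 : (∑ c, G.Scal x / (2 * ((n:ℝ) - 1)) / ((n:ℝ) - 2)
              * ((∑ q, L q * G.low x L q) * (G.low x Kv c * Kv c))) = 0 := by
          rw [← Finset.mul_sum, ← Finset.mul_sum, hKlK, mul_zero, mul_zero]
        rw [t1, t2, t3, t4]
        ring
      have h6 : (∑ c, ∑ f, G.ginv x c f * (2 * (G.Scal x / (2 * ((n:ℝ) - 1)) / ((n:ℝ) - 2))
            * G.low x (G.πv x Kv L c) f))
          = 2 * (G.Scal x / (2 * ((n:ℝ) - 1)) / ((n:ℝ) - 2)) * ((n : ℝ) - 1) := by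
        have h7 : ∀ c f, G.ginv x c f * (2 * (G.Scal x / (2 * ((n:ℝ) - 1)) / ((n:ℝ) - 2))
              * G.low x (G.πv x Kv L c) f)
            = 2 * (G.Scal x / (2 * ((n:ℝ) - 1)) / ((n:ℝ) - 2))
                * (G.ginv x c f * G.g x f c)
              - 2 * (G.Scal x / (2 * ((n:ℝ) - 1)) / ((n:ℝ) - 2))
                * (G.ginv x c f * (G.low x Kv c * G.low x L f)) := by
          intro c f
          rw [G.low_π x Kv L c f]
          ring
        simp_rw [h7, Finset.sum_sub_distrib, ← Finset.mul_sum]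
        rw [show (∑ c, ∑ f, G.ginv x c f * G.g x f c) = (n:ℝ) by
          have := G.gi_gg_trace x 1
          simpa using this]
        rw [G.gi_low₁ x Kv (fun f => G.low x L f)]
        rw [show (∑ f, Kv f * G.low x L f) = ∑ f, G.low x L f * Kv f from
          Finset.sum_congr rfl fun f _ => mul_comm _ _]
        rw [G.low_swap x L Kv, hKL]
        ring
      rw [h4, h6]
    -- combine
    have hfinal : G.Scal x / (2 * ((n:ℝ) - 1))
        = -2 * (G.Scal x / (2 * ((n:ℝ) - 1)) / ((n:ℝ) - 2))
          + (G.Scal x / (2 * ((n:ℝ) - 1)) / ((n:ℝ) - 2)) * ((n : ℝ) - 1) := by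
      have h := htrP2
      rw [htrP, hpart2] at h
      linear_combination h + (1/2) * hpart1
    field_simp [show ((n:ℝ) - 1) ≠ 0 by linarith] at hfinal
    have hzero : G.Scal x * ((2 * ((n:ℝ) - 1))^2 * ((n:ℝ) - 2)) = 0 := by
      linear_combination (2 * ((n:ℝ) - 1))^2 * ((n:ℝ) - 2) * hfinal
    have hpos : ((2 * ((n:ℝ) - 1))^2 * ((n:ℝ) - 2)) ≠ 0 :=
      mul_ne_zero (pow_ne_zero 2 hN1) hN2
    exact (mul_eq_zero.mp hzero).resolve_right hpos
  refine ⟨hs0, ?_⟩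
  intro X hX b
  have hX' : (∑ b, G.low x Kv b * X b) = 0 := (horth X).mp hX
  have hk0 : G.Scal x / (2 * ((n:ℝ) - 1)) / ((n:ℝ) - 2) = 0 := by
    rw [hs0]; simp
  have h2 : ∀ dd, 2 * G.Pc x X dd = (∑ q, L q * G.Pc x X q) * G.low x Kv dd := by
    intro dd
    have h := hID X hX' dd
    rw [hk0] at h
    linear_combination h
  have hβ : (∑ q, L q * G.Pc x X q) = 0 := by
    have h3 : (∑ dd, L dd * (2 * G.Pc x X dd))
        = ∑ dd, L dd * ((∑ q, L q * G.Pc x X q) * G.low x Kv dd) :=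
      Finset.sum_congr rfl fun dd _ => by rw [h2 dd]
    have h4 : (∑ dd, L dd * (2 * G.Pc x X dd)) = 2 * ∑ dd, L dd * G.Pc x X dd := by
      rw [Finset.mul_sum]
      exact Finset.sum_congr rfl fun dd _ => by ring
    have h5 : (∑ dd, L dd * ((∑ q, L q * G.Pc x X q) * G.low x Kv dd))
        = (∑ q, L q * G.Pc x X q) * ∑ dd, G.low x Kv dd * L dd := by
      rw [Finset.mul_sum]
      exact Finset.sum_congr rfl fun dd _ => by ring
    rw [h4, h5, hKL, mul_one] at h3
    linarith
  have hPcX : ∀ dd, G.Pc x X dd = 0 := by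
    intro dd
    have h := h2 dd
    rw [hβ, zero_mul] at h
    linarith
  rw [hRicY_left X b, hPcX b, hs0]
  simp

end MetricG

/-- Weyl degeneracy + parallel null vector ⇒ pp-wave: If (M,g), dim n > 2,
admits a parallel null vector field K and its Weyl tensor satisfies C_{abcd}X^aY^b = 0 for
all X,Y ⊥ K, then the scalar curvature vanishes and g is a pure radiation metric aligned
with K, hence a pp-wave (R_{abcd}X^aY^b = 0 for all X,Y ⊥ K). -/
theorem stmt_15 {n : ℕ} (hn : 2 < n) (G : MetricG n) (K : Pt n → Pt n)
    (hKs : SmoothVF K) (hK0 : ∀ x, K x ≠ 0) (hnull : G.IsNull K)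
    (hpar : ∀ x a b, G.covVec K a b x = 0)
    (hWdeg : ∀ x (X Y : Pt n), G.ip x (K x) X = 0 → G.ip x (K x) Y = 0 → ∀ c d,
      (∑ a, ∑ b, G.Weyl a b c d x * X a * Y b) = 0) :
    (∀ x, G.Scal x = 0) ∧ G.PureRadiation K ∧
      ∀ x (X Y : Pt n), G.ip x (K x) X = 0 → G.ip x (K x) Y = 0 → ∀ c d,
        (∑ a, ∑ b, G.Riem4 a b c d x * X a * Y b) = 0 := by
  have hcore : ∀ x : Pt n, G.Scal x = 0 ∧ ∀ X : Fin n → ℝ, G.ip x (K x) X = 0 →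
      ∀ b, (∑ a, G.Ricci a b x * X a) = 0 := by
    intro x
    refine G.core hn x (K x) (hK0 x) (hnull x) ?_ ?_ ?_ ?_
    · intro b c d; exact G.Riem4_K_slot1 hKs hpar x b c d
    · intro a c d; exact G.Riem4_K_slot2 hKs hpar x a c d
    · intro a b d; exact G.Riem4_K_slot3 hKs hpar x a b d
    · intro X Z hX hZ c d
      have h := hWdeg x X Z hX hZ c d
      rw [G.Weyl_contract x X Z c d] at h
      linarith
  have hscal : ∀ x, G.Scal x = 0 := fun x => (hcore x).1
  have hrad : G.PureRadiation K := fun x X hX b => (hcore x).2 X hX b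
  refine ⟨hscal, hrad, ?_⟩
  intro x X Y hX hY c d
  have hPcz : ∀ Z : Fin n → ℝ, G.ip x (K x) Z = 0 → ∀ dd, G.Pc x Z dd = 0 := by
    intro Z hZ dd
    have h1 : ∀ a, G.Schouten a dd x * Z a
        = (1 / ((n:ℝ) - 2)) * (G.Ricci a dd x * Z a) := by
      intro a
      unfold MetricG.Schouten
      rw [hscal x]
      ring
    unfold MetricG.Pc
    simp_rw [h1]
    rw [← Finset.mul_sum, (hcore x).2 Z hZ dd, mul_zero]
  have h := hWdeg x X Y hX hY c d
  rw [G.Weyl_contract x X Y c d] at h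
  rw [hPcz Y hY d, hPcz X hX d, hPcz X hX c, hPcz Y hY c] at h
  simp at h
  linarith
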